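/- arXiv:math/0509251 — 7 statements merged into one kernel-verified Lean document; each statement's English description precedes it below -/
import Mathlib

section
/- Let e ∈ A be invertible and set κ := λ⁻¹ν⁻¹(q−e)(q⁻¹+e). If e·κ = κ·e = ν·κ, then κ = λ⁻¹(e⁻¹ − e + λ·1) and κ² = μ·κ. -/
/-!
Expanding, `(q - e)(q⁻¹ + e) = e (e⁻¹ - e + λ)`. Cancelling `e` against the eigenvalue relation
`e κ = ν κ` gives `κ = ν e⁻¹ κ = λ⁻¹ (e⁻¹ - e + λ)`. Multiplying this on the left by `κ` and using
`κ e = ν κ`, hence `κ e⁻¹ = ν⁻¹ κ`, gives `κ² = λ⁻¹ (ν⁻¹ - ν + λ) κ`, and `λ⁻¹ (ν⁻¹ - ν + λ) = μ`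
by the same expansion with `ν` in place of `e`.
-/

namespace BMWPaper

noncomputable section

/-- `κ_u := λ⁻¹ ν⁻¹ (q - u)(q⁻¹ + u)` for an invertible element `u` of a ℂ-algebra,
where `λ := q - q⁻¹`. -/
def kap (q ν : ℂ) {A : Type*} [Ring A] [Algebra ℂ A] (u : Aˣ) : A :=
  ((q - q⁻¹)⁻¹ * ν⁻¹) • ((q • (1 : A) - (u : A)) * (q⁻¹ • (1 : A) + (u : A)))

/-- `μ := λ⁻¹ ν⁻¹ (q - ν)(q⁻¹ + ν)`. -/
def muBMW (q ν : ℂ) : ℂ := ((q - q⁻¹)⁻¹ * ν⁻¹) * ((q - ν) * (q⁻¹ + ν))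

/-- A local BMW pair `(e, f)` of invertible elements of a ℂ-algebra `A`:
`efe = fef`, `e κ_e = κ_e e = ν κ_e`, `f κ_f = κ_f f = ν κ_f`,
`κ_f e κ_f = ν⁻¹ κ_f` and `κ_f e⁻¹ κ_f = ν κ_f`. -/
def LocalBMWPair (q ν : ℂ) {A : Type*} [Ring A] [Algebra ℂ A] (e f : Aˣ) : Prop :=
  (e : A) * f * e = (f : A) * e * f ∧
  (e : A) * kap q ν e = ν • kap q ν e ∧
  kap q ν e * e = ν • kap q ν e ∧
  (f : A) * kap q ν f = ν • kap q ν f ∧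
  kap q ν f * f = ν • kap q ν f ∧
  kap q ν f * e * kap q ν f = ν⁻¹ • kap q ν f ∧
  kap q ν f * (↑e⁻¹ : A) * kap q ν f = ν • kap q ν f

section

variable {K A : Type*} [Field K] [Ring A] [Algebra K A]

theorem _root_.Units.mul_inv_eq_inv_smul_of_mul_eq_smul (u : Aˣ) {x : A} {ν : K} (hν : ν ≠ 0)
    (h : x * u = ν • x) : x * ↑u⁻¹ = ν⁻¹ • x := by
  rw [eq_inv_smul_iff₀ hν, ← smul_mul_assoc, ← h, u.mul_inv_cancel_right]

theorem _root_.Units.smul_sub_mul_inv_smul_add (u : Aˣ) {q : K} (hq : q ≠ 0) :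
    (q • (1 : A) - u) * (q⁻¹ • (1 : A) + u) = u * (↑u⁻¹ - u + (q - q⁻¹) • (1 : A)) := by
  simp only [mul_add, mul_sub, sub_mul, smul_mul_assoc, mul_smul_comm, one_mul, mul_one, u.mul_inv]
  match_scalars <;> field_simp
  ring

theorem mul_inv_sub_add_smul_one_of_mul_eq_smul (u : Aˣ) {x : A} {ν : K} (hν : ν ≠ 0)
    (h : x * u = ν • x) (c : K) :
    x * (↑u⁻¹ - u + c • (1 : A)) = (ν⁻¹ - ν + c) • x := by
  rw [mul_add, mul_sub, u.mul_inv_eq_inv_smul_of_mul_eq_smul hν h, h, mul_smul_comm, mul_one,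
    add_smul, sub_smul]

end

section

variable {A : Type*} [Ring A] [Algebra ℂ A] {q ν : ℂ}

theorem kap_eq_smul_mul (hq : q ≠ 0) (e : Aˣ) :
    kap q ν e = ((q - q⁻¹)⁻¹ * ν⁻¹) • ((e : A) * (↑e⁻¹ - e + (q - q⁻¹) • (1 : A))) := by
  rw [kap, e.smul_sub_mul_inv_smul_add hq]

theorem kap_eq_of_mul_kap_eq_smul (hq : q ≠ 0) (hν : ν ≠ 0) {e : Aˣ}
    (h : (e : A) * kap q ν e = ν • kap q ν e) :
    kap q ν e = (q - q⁻¹)⁻¹ • ((↑e⁻¹ : A) - (e : A) + (q - q⁻¹) • (1 : A)) :=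
  calc kap q ν e = ↑e⁻¹ * ((e : A) * kap q ν e) := (e.inv_mul_cancel_left _).symm
    _ = ν • (↑e⁻¹ * kap q ν e) := by rw [h, mul_smul_comm]
    _ = _ := by
      rw [kap_eq_smul_mul hq, mul_smul_comm, e.inv_mul_cancel_left, smul_smul, mul_left_comm,
        mul_inv_cancel₀ hν, mul_one]

theorem muBMW_eq (hq : q ≠ 0) (hν : ν ≠ 0) :
    muBMW q ν = (q - q⁻¹)⁻¹ * (ν⁻¹ - ν + (q - q⁻¹)) := by
  rw [muBMW]
  field_simp
  ring

end

theorem stmt0_general (q ν : ℂ) (hq0 : q ≠ 0)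
    (hν0 : ν ≠ 0)
    (A : Type*) [Ring A] [Algebra ℂ A]
    (e : Aˣ)
    (h1 : (e : A) * kap q ν e = ν • kap q ν e)
    (h2 : kap q ν e * e = ν • kap q ν e) :
    kap q ν e = (q - q⁻¹)⁻¹ • ((↑e⁻¹ : A) - (e : A) + (q - q⁻¹) • (1 : A)) ∧
    kap q ν e * kap q ν e = muBMW q ν • kap q ν e := by
  have hκ := kap_eq_of_mul_kap_eq_smul hq0 hν0 h1
  refine ⟨hκ, ?_⟩
  calc kap q ν e * kap q ν e
      = (q - q⁻¹)⁻¹ • (kap q ν e * (↑e⁻¹ - e + (q - q⁻¹) • (1 : A))) := by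
        nth_rewrite 2 [hκ]
        rw [mul_smul_comm]
    _ = muBMW q ν • kap q ν e := by
        rw [mul_inv_sub_add_smul_one_of_mul_eq_smul e hν0 h2, smul_smul, muBMW_eq hq0 hν0]

/-- if `e κ = κ e = ν κ` for `κ := λ⁻¹ν⁻¹(q-e)(q⁻¹+e)`, then
`κ = λ⁻¹(e⁻¹ - e + λ·1)` and `κ² = μ κ`. -/
theorem stmt0 (q ν : ℂ) (hq0 : q ≠ 0) (hq1 : q ≠ 1) (hqm1 : q ≠ -1)
    (hν0 : ν ≠ 0) (hνq : ν ≠ q) (hνq' : ν ≠ -q⁻¹)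
    (A : Type*) [Ring A] [Algebra ℂ A]
    (e : Aˣ)
    (h1 : (e : A) * kap q ν e = ν • kap q ν e)
    (h2 : kap q ν e * e = ν • kap q ν e) :
    kap q ν e = (q - q⁻¹)⁻¹ • ((↑e⁻¹ : A) - (e : A) + (q - q⁻¹) • (1 : A)) ∧
    kap q ν e * kap q ν e = muBMW q ν • kap q ν e :=
  stmt0_general q ν hq0 hν0 A e h1 h2

end

end BMWPaper
end

section
/- Let e, f ∈ A be invertible elements satisfying efe = fef, e·κ_e = κ_e·e = ν·κ_e, f·κ_f = κ_f·f = ν·κ_f, and κ_f·e·κ_f = ν⁻¹·κ_f. If ν ≠ λ, then the remaining Birman–Murakami–Wenzl defining relation κ_f·e⁻¹·κ_f = ν·κ_f follows; i.e., for ν ≠ λ the two relations κ_{i+1}e_iκ_{i+1} = ν⁻¹κ_{i+1} and κ_{i+1}e_i⁻¹κ_{i+1} = νκ_{i+1} are algebraically dependent. -/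
/-!
Put `P = λν κ_f = 1 + λf - f²` and `Q = λν κ_e`. The relation `eQ = νQ` gives
`e⁻¹ = e - λ + ν⁻¹Q`, so `P e⁻¹ P = λν(ν - λ) P + ν⁻¹ PQP` by `P² = (1 + λν - ν²)P` and
`PeP = λP`. The braid relation gives `e⁻¹Pe = fQf⁻¹`, hence `P e⁻¹ P e P = PQP`; multiplying the
previous identity on the right by `eP` therefore yields `(ν - λ) PQP = (ν - λ) λ²ν² P`. For
`ν ≠ λ` this forces `PQP = λ²ν² P`, and then `P e⁻¹ P = λν² P`, which is `κ_f e⁻¹ κ_f = ν κ_f`.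
If `λν = 0`, then `κ = 0` because of the convention `0⁻¹ = 0`.
-/

namespace BMWPaper

noncomputable section

section BMWQuad

variable {K A : Type*} [Field K] [Ring A] [Algebra K A]

/-- For `c = q - q⁻¹` this is `(q - u)(q⁻¹ + u)` multiplied out. -/
def bmwQuad (c : K) (u : A) : A := 1 + c • u - u * u

theorem mul_bmwQuad_of_mul_eq_smul (c : K) {ν : K} {x u : A} (h : x * u = ν • x) :
    x * bmwQuad c u = (1 + c * ν - ν * ν) • x := by
  rw [bmwQuad, mul_sub, mul_add, mul_one, mul_smul_comm, ← mul_assoc, h, smul_mul_assoc, h]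
  module

theorem bmwQuad_conj (c : K) {a b : A} (hab : a * b = 1) (hba : b * a = 1) (x : A) :
    a * bmwQuad c x * b = bmwQuad c (a * x * b) := by
  have hsq : a * x * b * (a * x * b) = a * (x * x) * b := by
    simp only [mul_assoc, ← mul_assoc b a, hba, one_mul]
  rw [bmwQuad, bmwQuad, hsq]
  simp only [mul_add, mul_sub, add_mul, sub_mul, mul_one, hab, mul_smul_comm, smul_mul_assoc]

theorem inv_eq_of_mul_bmwQuad {c ν : K} (hν : ν ≠ 0) {e : Aˣ}
    (he : (e : A) * bmwQuad c (e : A) = ν • bmwQuad c (e : A)) :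
    (↑e⁻¹ : A) = e - c • 1 + ν⁻¹ • bmwQuad c (e : A) := by
  apply Units.inv_eq_of_mul_eq_one_right
  rw [mul_add, mul_smul_comm, he, inv_smul_smul₀ hν, bmwQuad]
  simp only [mul_sub, mul_smul_comm, mul_one]
  abel

end BMWQuad

theorem inv_mul_mul_eq_of_braid {M : Type*} [Monoid M] {e f : Mˣ}
    (h : (e : M) * f * e = f * e * f) : (↑e⁻¹ : M) * f * e = f * e * ↑f⁻¹ := by
  rw [mul_assoc, Units.inv_mul_eq_iff_eq_mul, ← mul_assoc, ← mul_assoc, h,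
    Units.mul_inv_cancel_right]

theorem kap_eq_smul_bmwQuad (q ν : ℂ) {A : Type*} [Ring A] [Algebra ℂ A] (u : Aˣ) :
    kap q ν u = ((q - q⁻¹) * ν)⁻¹ • bmwQuad (q - q⁻¹) (u : A) := by
  rcases eq_or_ne q 0 with rfl | hq
  · simp [kap]
  rw [kap, mul_inv, bmwQuad]
  congr 1
  simp only [sub_mul, mul_add, smul_mul_assoc, mul_smul_comm, one_mul, mul_one, smul_sub,
    smul_smul, inv_mul_cancel₀ hq]
  module

section LocalPair

variable {K A : Type*} [Field K] [Ring A] [Algebra K A] {c ν : K} {e f : Aˣ}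

local notation "P" => bmwQuad c (f : A)
local notation "Q" => bmwQuad c (e : A)

theorem bmwQuad_mul_inv_mul_bmwQuad_eq_add (hν : ν ≠ 0)
    (he : (e : A) * Q = ν • Q) (hfr : P * f = ν • P) (hfef : P * e * P = c • P) :
    P * ↑e⁻¹ * P = (c * ν * (ν - c)) • P + ν⁻¹ • (P * Q * P) := by
  rw [inv_eq_of_mul_bmwQuad hν he]
  simp only [mul_add, mul_sub, add_mul, sub_mul, mul_smul_comm, smul_mul_assoc, mul_one]
  rw [hfef, mul_bmwQuad_of_mul_eq_smul c hfr]
  module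

theorem bmwQuad_mul_inv_mul_mul_mul_bmwQuad (hν : ν ≠ 0)
    (hbraid : (e : A) * f * e = f * e * f) (hfl : (f : A) * P = ν • P) (hfr : P * f = ν • P) :
    P * ↑e⁻¹ * P * e * P = P * Q * P := by
  have hconj : ↑e⁻¹ * P * e = f * Q * ↑f⁻¹ := by
    rw [bmwQuad_conj c e.inv_mul e.mul_inv, bmwQuad_conj c f.mul_inv f.inv_mul,
      inv_mul_mul_eq_of_braid hbraid]
  have hfinv : ↑f⁻¹ * P = ν⁻¹ • P := by
    rw [Units.inv_mul_eq_iff_eq_mul, mul_smul_comm, hfl, inv_smul_smul₀ hν]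
  calc P * ↑e⁻¹ * P * e * P = P * (↑e⁻¹ * P * e) * P := by simp only [mul_assoc]
    _ = P * f * Q * (↑f⁻¹ * P) := by rw [hconj]; simp only [mul_assoc]
    _ = P * Q * P := by
      rw [hfr, hfinv, smul_mul_assoc, smul_mul_assoc, mul_smul_comm, smul_inv_smul₀ hν]

theorem bmwQuad_mul_bmwQuad_mul_bmwQuad (hν : ν ≠ 0) (hνc : ν ≠ c)
    (hbraid : (e : A) * f * e = f * e * f) (he : (e : A) * Q = ν • Q)
    (hfl : (f : A) * P = ν • P) (hfr : P * f = ν • P) (hfef : P * e * P = c • P) :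
    P * Q * P = (c * ν) ^ 2 • P := by
  have h := (bmwQuad_mul_inv_mul_mul_mul_bmwQuad hν hbraid hfl hfr).symm
  rw [bmwQuad_mul_inv_mul_bmwQuad_eq_add hν he hfr hfef] at h
  have hPQPeP : P * Q * P * e * P = c • (P * Q * P) := by
    rw [show P * Q * P * e * P = P * Q * (P * e * P) by simp only [mul_assoc], hfef,
      mul_smul_comm]
  simp only [add_mul, smul_mul_assoc, hfef, hPQPeP] at h
  have h' := congrArg (ν • ·) h
  simp only [smul_add, smul_inv_smul₀ hν] at h'
  apply smul_right_injective A (sub_ne_zero.mpr hνc)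
  linear_combination (norm := module) h'

theorem bmwQuad_mul_inv_mul_bmwQuad (hν : ν ≠ 0) (hνc : ν ≠ c)
    (hbraid : (e : A) * f * e = f * e * f) (he : (e : A) * Q = ν • Q)
    (hfl : (f : A) * P = ν • P) (hfr : P * f = ν • P) (hfef : P * e * P = c • P) :
    P * ↑e⁻¹ * P = (c * ν ^ 2) • P := by
  rw [bmwQuad_mul_inv_mul_bmwQuad_eq_add hν he hfr hfef,
    bmwQuad_mul_bmwQuad_mul_bmwQuad hν hνc hbraid he hfl hfr hfef, smul_smul, ← add_smul]
  congr 1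
  field_simp
  ring

end LocalPair

theorem stmt1_general (q ν : ℂ)
    (A : Type*) [Ring A] [Algebra ℂ A]
    (hnulam : ν ≠ q - q⁻¹)
    (e f : Aˣ)
    (hbraid : (e : A) * f * e = (f : A) * e * f)
    (he1 : (e : A) * kap q ν e = ν • kap q ν e)
    (hf1 : (f : A) * kap q ν f = ν • kap q ν f)
    (hf2 : kap q ν f * f = ν • kap q ν f)
    (hfe : kap q ν f * e * kap q ν f = ν⁻¹ • kap q ν f) :
    kap q ν f * (↑e⁻¹ : A) * kap q ν f = ν • kap q ν f := by
  obtain hcν | hcν := eq_or_ne ((q - q⁻¹) * ν) 0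
  · simp [kap_eq_smul_bmwQuad, hcν]
  have hν : ν ≠ 0 := right_ne_zero_of_mul hcν
  have hbmw (u : Aˣ) : bmwQuad (q - q⁻¹) (u : A) = ((q - q⁻¹) * ν) • kap q ν u := by
    rw [kap_eq_smul_bmwQuad, smul_inv_smul₀ hcν]
  have key := bmwQuad_mul_inv_mul_bmwQuad hν hnulam hbraid
    (by rw [hbmw, mul_smul_comm, he1, smul_comm])
    (by rw [hbmw, mul_smul_comm, hf1, smul_comm])
    (by rw [hbmw, smul_mul_assoc, hf2, smul_comm])
    (by
      rw [hbmw, smul_mul_assoc, smul_mul_assoc, mul_smul_comm, hfe, smul_smul, smul_smul,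
        smul_smul]
      congr 1
      field_simp)
  simp only [kap_eq_smul_bmwQuad, smul_mul_assoc, mul_smul_comm, smul_smul, key]
  congr 1
  field_simp

/-- for `ν ≠ λ` the relation `κ_f e⁻¹ κ_f = ν κ_f` follows from the
other Birman–Murakami–Wenzl relations. -/
theorem stmt1 (q ν : ℂ) (hq0 : q ≠ 0) (hq1 : q ≠ 1) (hqm1 : q ≠ -1)
    (hν0 : ν ≠ 0) (hνq : ν ≠ q) (hνq' : ν ≠ -q⁻¹)
    (A : Type*) [Ring A] [Algebra ℂ A]
    (hnulam : ν ≠ q - q⁻¹)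
    (e f : Aˣ)
    (hbraid : (e : A) * f * e = (f : A) * e * f)
    (he1 : (e : A) * kap q ν e = ν • kap q ν e)
    (he2 : kap q ν e * e = ν • kap q ν e)
    (hf1 : (f : A) * kap q ν f = ν • kap q ν f)
    (hf2 : kap q ν f * f = ν • kap q ν f)
    (hfe : kap q ν f * e * kap q ν f = ν⁻¹ • kap q ν f) :
    kap q ν f * (↑e⁻¹ : A) * kap q ν f = ν • kap q ν f :=
  stmt1_general q ν A hnulam e f hbraid he1 hf1 hf2 hfe

end

end BMWPaper
end

section
/- Let (e,f) be a local BMW pair in A. Then κ_e·κ_f = κ_e·f·e, κ_f·κ_e = κ_f·e·f, and κ_f·κ_e = κ_f·e⁻¹·f⁻¹. -/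
/-!
The eigenvalue relation `κ_u u = ν κ_u` puts `κ_u` in skein form: `u - u⁻¹ = λ (1 - κ_u)`.
Substituting this for `f` and using the braid relation and the two sandwich relations gives
`κ_f e f = κ_f e⁻¹ f⁻¹`, and then `λ κ_f κ_e f = λ κ_f e⁻¹`. In the opposite algebra `(e, f)` is
again a local BMW pair, so there `κ_f κ_e = κ_f e f`, i.e. `κ_e κ_f = f e κ_f` in `A`. Since `κ`
is a polynomial, the conjugation `(fe) f (fe)⁻¹ = e` maps `κ_f` to `κ_e`, which turns this into
`κ_e κ_f = κ_e f e`.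
-/

namespace BMWPaper

noncomputable section

section Braid

variable {G : Type*} [Group G] {a b : G}

theorem mul_inv_eq_of_braid (h : a * b * a = b * a * b) : a * b⁻¹ = b⁻¹ * (a⁻¹ * (b * a)) :=
  calc a * b⁻¹ = b⁻¹ * a⁻¹ * (a * b * a) * b⁻¹ := by group
    _ = b⁻¹ * (a⁻¹ * (b * a)) := by rw [h]; group

theorem inv_mul_inv_mul_eq_of_braid (h : a * b * a = b * a * b) :
    a⁻¹ * (b⁻¹ * a) = b * (a⁻¹ * b⁻¹) :=
  calc a⁻¹ * (b⁻¹ * a) = a⁻¹ * b⁻¹ * (a * b * a) * a⁻¹ * b⁻¹ := by group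
    _ = b * (a⁻¹ * b⁻¹) := by rw [h]; group

end Braid

section Sandwich

variable {𝕜 R : Type*} [Field 𝕜] [Ring R] [Algebra 𝕜 R] {l ν : 𝕜} {e f u : Rˣ} {K k : R}

theorem mul_units_inv_eq_of_mul_eq_smul (hν : ν ≠ 0) (h : k * u = ν • k) :
    k * ↑u⁻¹ = ν⁻¹ • k := by
  rw [eq_inv_smul_iff₀ hν, ← smul_mul_assoc, ← h, Units.mul_inv_cancel_right]

theorem mul_mul_eq_of_sandwich (hν : ν ≠ 0) (hb : (e : R) * f * e = f * e * f)
    (hf : (f : R) - ↑f⁻¹ = l • (1 - k)) (hkf : k * f = ν • k)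
    (hs : k * e * k = ν⁻¹ • k) (hs' : k * ↑e⁻¹ * k = ν • k) :
    k * e * f = k * ↑e⁻¹ * ↑f⁻¹ := by
  have hf' : (f : R) = ↑f⁻¹ + l • (1 - k) := eq_add_of_sub_eq' hf
  have hkf' := mul_units_inv_eq_of_mul_eq_smul hν hkf
  have hkfL (x : R) : k * (f * x) = ν • (k * x) := by rw [← mul_assoc, hkf, smul_mul_assoc]
  have hs'L (x : R) : k * (↑e⁻¹ * (k * x)) = ν • (k * x) := by
    rw [← mul_assoc, ← mul_assoc, hs', smul_mul_assoc]
  have hbU : e * f * e = f * e * f := Units.ext (by simpa only [Units.val_mul] using hb)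
  have hb₁ : (e : R) * ↑f⁻¹ = ↑f⁻¹ * (↑e⁻¹ * (↑f * ↑e)) := by
    simpa using congrArg Units.val (mul_inv_eq_of_braid hbU)
  have hb₂ : (↑e⁻¹ : R) * (↑f⁻¹ * ↑e) = ↑f * (↑e⁻¹ * ↑f⁻¹) := by
    simpa using congrArg Units.val (inv_mul_inv_mul_eq_of_braid hbU)
  have h_subst : k * e * f = k * e * ↑f⁻¹ + l • (k * e) - (l * ν⁻¹) • k := by
    conv_lhs => rw [hf']
    simp only [mul_add, mul_sub, mul_smul_comm, mul_one, hs]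
    module
  have h_braid : k * e * ↑f⁻¹ = ν⁻¹ • (k * ↑e⁻¹ * (↑f * ↑e)) := by
    rw [mul_assoc, hb₁, ← mul_assoc, hkf', smul_mul_assoc, mul_assoc]
  have h_subst' : k * ↑e⁻¹ * (↑f * ↑e) = ν • (k * ↑e⁻¹ * ↑f⁻¹) + l • k - (l * ν) • (k * e) := by
    rw [hf']
    simp only [add_mul, mul_add, sub_mul, mul_sub, smul_mul_assoc, mul_smul_comm, one_mul,
      mul_one, mul_assoc, hb₂, Units.inv_mul, hkfL, hs'L]
    module
  rw [h_subst, h_braid, h_subst']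
  match_scalars <;> field_simp <;> ring

theorem mul_eq_of_sandwich (hl : l ≠ 0) (hν : ν ≠ 0) (hb : (e : R) * f * e = f * e * f)
    (he : (e : R) - ↑e⁻¹ = l • (1 - K)) (hf : (f : R) - ↑f⁻¹ = l • (1 - k))
    (hkf : k * f = ν • k) (hs : k * e * k = ν⁻¹ • k) (hs' : k * ↑e⁻¹ * k = ν • k) :
    k * K = k * e * f ∧ k * K = k * ↑e⁻¹ * ↑f⁻¹ := by
  have hef := mul_mul_eq_of_sandwich hν hb hf hkf hs hs'
  have hK : K = 1 - l⁻¹ • ((e : R) - ↑e⁻¹) := by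
    rw [he, smul_smul, inv_mul_cancel₀ hl, one_smul, sub_sub_cancel]
  have hf' : (f : R) = ↑f⁻¹ + l • (1 - k) := eq_add_of_sub_eq' hf
  have hKf : k * K * f = k * ↑e⁻¹ := by
    rw [hK]
    simp only [mul_sub, sub_mul, mul_one, mul_smul_comm, smul_mul_assoc, hkf, hef]
    rw [hf']
    simp only [mul_add, mul_sub, mul_one, mul_smul_comm, hs']
    match_scalars <;> field_simp <;> ring
  have hkK : k * K = k * ↑e⁻¹ * ↑f⁻¹ := by rw [← hKf, Units.mul_inv_cancel_right]
  exact ⟨hkK.trans hef.symm, hkK⟩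

open MulOpposite in
theorem mul_eq_of_sandwich' (hl : l ≠ 0) (hν : ν ≠ 0) (hb : (e : R) * f * e = f * e * f)
    (he : (e : R) - ↑e⁻¹ = l • (1 - K)) (hf : (f : R) - ↑f⁻¹ = l • (1 - k))
    (hfk : f * k = ν • k) (hs : k * e * k = ν⁻¹ • k) (hs' : k * ↑e⁻¹ * k = ν • k) :
    K * k = f * e * k := by
  let opU (x : Rˣ) : Rᵐᵒᵖˣ := Units.opEquiv.symm (op x)
  have val_opU (x : Rˣ) : (opU x : Rᵐᵒᵖ) = op (x : R) := rfl
  have val_opU_inv (x : Rˣ) : (↑(opU x)⁻¹ : Rᵐᵒᵖ) = op (↑x⁻¹ : R) := rfl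
  have h := (mul_eq_of_sandwich (e := opU e) (f := opU f) (K := op K) (k := op k) hl hν
    (by simpa only [val_opU, op_mul, mul_assoc] using congrArg op hb)
    (by simpa only [val_opU, val_opU_inv, op_sub, op_smul, op_one] using congrArg op he)
    (by simpa only [val_opU, val_opU_inv, op_sub, op_smul, op_one] using congrArg op hf)
    (by simpa only [val_opU, op_mul, op_smul] using congrArg op hfk)
    (by simpa only [val_opU, op_mul, op_smul, mul_assoc] using congrArg op hs)
    (by simpa only [val_opU_inv, op_mul, op_smul, mul_assoc] using congrArg op hs')).1
  simpa only [val_opU, ← op_mul, op_inj, mul_assoc] using h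

end Sandwich

section Kappa

variable {q ν : ℂ} {A : Type*} [Ring A] [Algebra ℂ A]

theorem kap_eq_smul (hq : q ≠ 0) (u : Aˣ) :
    kap q ν u = ((q - q⁻¹)⁻¹ * ν⁻¹) • (1 + (q - q⁻¹) • (u : A) - u * u) := by
  rw [kap]
  congr 1
  simp only [sub_mul, mul_add, smul_mul_assoc, mul_smul_comm, one_mul, mul_one]
  match_scalars <;> field_simp
  ring

theorem sub_units_inv_eq_smul_one_sub_kap (hq : q ≠ 0) (hl : q - q⁻¹ ≠ 0) (hν : ν ≠ 0)
    {u : Aˣ} (h : kap q ν u * u = ν • kap q ν u) :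
    (u : A) - ↑u⁻¹ = (q - q⁻¹) • (1 - kap q ν u) := by
  have hκ : kap q ν u = (q - q⁻¹)⁻¹ • ((↑u⁻¹ : A) + (q - q⁻¹) • 1 - u) :=
    calc kap q ν u = ν • (kap q ν u * ↑u⁻¹) := by
          rw [mul_units_inv_eq_of_mul_eq_smul hν h, smul_smul, mul_inv_cancel₀ hν, one_smul]
      _ = (q - q⁻¹)⁻¹ • ((↑u⁻¹ : A) + (q - q⁻¹) • 1 - u) := by
          rw [kap_eq_smul hq]
          simp only [smul_mul_assoc, add_mul, sub_mul, one_mul, mul_assoc, Units.mul_inv,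
            mul_one, smul_smul]
          match_scalars <;> field_simp
  rw [hκ, smul_sub, smul_smul, mul_inv_cancel₀ hl, one_smul]
  abel

theorem semiconjBy_kap {a : A} {u v : Aˣ} (h : SemiconjBy a u v) :
    SemiconjBy a (kap q ν u) (kap q ν v) := by
  have hscalar (r : ℂ) : SemiconjBy a (r • 1) (r • 1) := (SemiconjBy.one_right a).smul_right r
  exact (((hscalar q).sub_right h).mul_right ((hscalar q⁻¹).add_right h)).smul_right _

theorem sub_inv_ne_zero (hq0 : q ≠ 0) (hq1 : q ≠ 1) (hqm1 : q ≠ -1) : q - q⁻¹ ≠ 0 := by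
  intro h
  have hsq : q * q = 1 := by
    nth_rewrite 2 [eq_of_sub_eq_zero h]
    exact mul_inv_cancel₀ hq0
  exact (mul_self_eq_one_iff.mp hsq).elim hq1 hqm1

end Kappa

theorem stmt2_general (q ν : ℂ) (hq0 : q ≠ 0) (hq1 : q ≠ 1) (hqm1 : q ≠ -1)
    (hν0 : ν ≠ 0)
    (A : Type*) [Ring A] [Algebra ℂ A]
    (e f : Aˣ) (h : LocalBMWPair q ν e f) :
    kap q ν e * kap q ν f = kap q ν e * f * e ∧
    kap q ν f * kap q ν e = kap q ν f * e * f ∧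
    kap q ν f * kap q ν e = kap q ν f * (↑e⁻¹ : A) * (↑f⁻¹ : A) := by
  obtain ⟨hb, -, hke, hfk, hkf, hs, hs'⟩ := h
  have hl := sub_inv_ne_zero hq0 hq1 hqm1
  have he := sub_units_inv_eq_smul_one_sub_kap hq0 hl hν0 hke
  have hf := sub_units_inv_eq_smul_one_sub_kap hq0 hl hν0 hkf
  obtain ⟨hkK, hkK'⟩ := mul_eq_of_sandwich hl hν0 hb he hf hkf hs hs'
  refine ⟨?_, hkK, hkK'⟩
  have hconj : SemiconjBy ((f : A) * e) f e := by
    rw [SemiconjBy, ← mul_assoc]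
    exact hb.symm
  rw [mul_eq_of_sandwich' hl hν0 hb he hf hfk hs hs', mul_assoc _ (f : A)]
  exact semiconjBy_kap hconj

/-- for a local BMW pair `(e,f)`:
`κ_e κ_f = κ_e f e`, `κ_f κ_e = κ_f e f` and `κ_f κ_e = κ_f e⁻¹ f⁻¹`. -/
theorem stmt2 (q ν : ℂ) (hq0 : q ≠ 0) (hq1 : q ≠ 1) (hqm1 : q ≠ -1)
    (hν0 : ν ≠ 0) (hνq : ν ≠ q) (hνq' : ν ≠ -q⁻¹)
    (A : Type*) [Ring A] [Algebra ℂ A]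
    (e f : Aˣ) (h : LocalBMWPair q ν e f) :
    kap q ν e * kap q ν f = kap q ν e * f * e ∧
    kap q ν f * kap q ν e = kap q ν f * e * f ∧
    kap q ν f * kap q ν e = kap q ν f * (↑e⁻¹ : A) * (↑f⁻¹ : A) :=
  stmt2_general q ν hq0 hq1 hqm1 hν0 A e f h

end

end BMWPaper
end

section
/- Let (e,f) be a local BMW pair in A. Then κ_e·κ_f·κ_e = κ_e and κ_f·κ_e·κ_f = κ_f. -/
/-!
The braid relation `efe = fef` says that `fe` conjugates `f` into `e`; since `κ_u` is a
polynomial in `u`, it follows that `κ_e = (fe) κ_f (fe)⁻¹`. Because `κ_f` commutes with `f` and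
absorbs it as the scalar `ν`, both identities reduce to
`κ_f e^{∓1} κ_f e^{±1} κ_f = κ_f`, which is the product of the two mixed relations
`κ_f e^{±1} κ_f = ν^{∓1} κ_f`.
-/

namespace BMWPaper

noncomputable section

theorem kap_map (q ν : ℂ) {A B : Type*} [Ring A] [Algebra ℂ A] [Ring B] [Algebra ℂ B]
    (φ : A →ₐ[ℂ] B) (u : Aˣ) : kap q ν (Units.map φ u) = φ (kap q ν u) := by
  simp [kap]

theorem kap_conj (q ν : ℂ) {A : Type*} [Ring A] [Algebra ℂ A] (g u : Aˣ) :
    kap q ν (g * u * g⁻¹) = g * kap q ν u * ↑g⁻¹ := by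
  have h := kap_map q ν (MulSemiringAction.toAlgHom ℂ A (ConjAct.toConjAct g)) u
  simp only [MulSemiringAction.toAlgHom_apply, ConjAct.units_smul_def,
    ConjAct.ofConjAct_toConjAct] at h
  rw [← h]
  congr 1
  ext
  simp [ConjAct.units_smul_def]

theorem commute_kap (q ν : ℂ) {A : Type*} [Ring A] [Algebra ℂ A] (u : Aˣ) :
    Commute (u : A) (kap q ν u) := by
  unfold kap
  apply Commute.smul_right
  apply Commute.mul_right <;> simp [Commute.sub_right, Commute.add_right, Commute.smul_right]

theorem mul_mul_inv_eq_of_braid {G : Type*} [Group G] {a b : G} (h : a * b * a = b * a * b) :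
    b * a * b * (b * a)⁻¹ = a := by
  rw [← h]; group

section

variable {𝕜 A : Type*} [Field 𝕜] [Ring A] [Algebra 𝕜 A] {ν : 𝕜} {K : A} {e f : Aˣ}

theorem inv_mul_eq_inv_smul_of_mul_eq_smul (hν : ν ≠ 0) (h : (f : A) * K = ν • K) :
    ↑f⁻¹ * K = ν⁻¹ • K := by
  rw [eq_inv_smul_iff₀ hν, ← mul_smul_comm, ← h, Units.inv_mul_cancel_left]

theorem mul_mul_mul_mul_eq_self {x y : A} {c d : 𝕜} (hx : K * x * K = c • K)
    (hy : K * y * K = d • K) (hcd : c * d = 1) : K * x * K * y * K = K := by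
  rw [hx, smul_mul_assoc, smul_mul_assoc, hy, smul_smul, hcd, one_smul]

theorem conj_mul_mul_conj_eq_conj (hν : ν ≠ 0) (hfK : Commute (f : A) K)
    (he : K * e * K = ν⁻¹ • K) (he' : K * ↑e⁻¹ * K = ν • K) :
    ↑(f * e) * K * ↑(f * e)⁻¹ * K * (↑(f * e) * K * ↑(f * e)⁻¹) =
      ↑(f * e) * K * ↑(f * e)⁻¹ := by
  have hmid : ↑(f * e)⁻¹ * K * ↑(f * e) = ↑e⁻¹ * K * e := by
    simp only [mul_inv_rev, Units.val_mul, mul_assoc]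
    rw [← mul_assoc K, ← hfK.eq, mul_assoc, Units.inv_mul_cancel_left]
  calc ↑(f * e) * K * ↑(f * e)⁻¹ * K * (↑(f * e) * K * ↑(f * e)⁻¹)
      = ↑(f * e) * (K * (↑(f * e)⁻¹ * K * ↑(f * e)) * K) * ↑(f * e)⁻¹ := by
        simp only [mul_assoc]
    _ = ↑(f * e) * K * ↑(f * e)⁻¹ := by
        rw [hmid, show K * (↑e⁻¹ * K * e) * K = K * ↑e⁻¹ * K * e * K by simp only [mul_assoc],
          mul_mul_mul_mul_eq_self he' he (mul_inv_cancel₀ hν)]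

theorem mul_conj_mul_eq_self (hν : ν ≠ 0) (hfK : Commute (f : A) K) (hKf : K * f = ν • K)
    (he : K * e * K = ν⁻¹ • K) (he' : K * ↑e⁻¹ * K = ν • K) :
    K * (↑(f * e) * K * ↑(f * e)⁻¹) * K = K := by
  have hfK' : ↑f⁻¹ * K = ν⁻¹ • K := inv_mul_eq_inv_smul_of_mul_eq_smul hν (hfK.eq.trans hKf)
  calc K * (↑(f * e) * K * ↑(f * e)⁻¹) * K = (K * f) * (e * K * ↑e⁻¹) * (↑f⁻¹ * K) := by
        simp only [mul_inv_rev, Units.val_mul, mul_assoc]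
    _ = K * e * K * ↑e⁻¹ * K := by
        rw [hKf, hfK', smul_mul_assoc, smul_mul_assoc, mul_smul_comm, smul_smul,
          mul_inv_cancel₀ hν, one_smul]
        simp only [mul_assoc]
    _ = K := mul_mul_mul_mul_eq_self he he' (inv_mul_cancel₀ hν)

end

theorem kap_eq_conj_of_braid (q ν : ℂ) {A : Type*} [Ring A] [Algebra ℂ A] {e f : Aˣ}
    (h : (e : A) * f * e = f * e * f) :
    kap q ν e = ↑(f * e) * kap q ν f * ↑(f * e)⁻¹ := by
  rw [← kap_conj, mul_mul_inv_eq_of_braid (Units.ext h)]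

theorem stmt3_general (q ν : ℂ)
    (hν0 : ν ≠ 0)
    (A : Type*) [Ring A] [Algebra ℂ A]
    (e f : Aˣ) (h : LocalBMWPair q ν e f) :
    kap q ν e * kap q ν f * kap q ν e = kap q ν e ∧
    kap q ν f * kap q ν e * kap q ν f = kap q ν f := by
  obtain ⟨hbraid, -, -, -, hKf, hKeK, hKeinvK⟩ := h
  rw [kap_eq_conj_of_braid q ν hbraid]
  exact ⟨conj_mul_mul_conj_eq_conj hν0 (commute_kap q ν f) hKeK hKeinvK,
    mul_conj_mul_eq_self hν0 (commute_kap q ν f) hKf hKeK hKeinvK⟩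

/-- for a local BMW pair `(e,f)`:
`κ_e κ_f κ_e = κ_e` and `κ_f κ_e κ_f = κ_f`. -/
theorem stmt3 (q ν : ℂ) (hq0 : q ≠ 0) (hq1 : q ≠ 1) (hqm1 : q ≠ -1)
    (hν0 : ν ≠ 0) (hνq : ν ≠ q) (hνq' : ν ≠ -q⁻¹)
    (A : Type*) [Ring A] [Algebra ℂ A]
    (e f : Aˣ) (h : LocalBMWPair q ν e f) :
    kap q ν e * kap q ν f * kap q ν e = kap q ν e ∧
    kap q ν f * kap q ν e * kap q ν f = kap q ν f :=
  stmt3_general q ν hν0 A e f h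

end

end BMWPaper
end

section
/- (Proposition 1) Let R be an invertible skew-invertible matrix on V⊗V satisfying the Yang–Baxter equation R₁₂R₂₃R₁₂ = R₂₃R₁₂R₂₃, with skew inverse Ψ, and set C := Tr₍₁₎Ψ, D := Tr₍₂₎Ψ. Then the following identities of matrices on V⊗V hold: C₁·Ψ = R₂₁⁻¹·C₂, Ψ·C₁ = C₂·R₂₁⁻¹, D₂·Ψ = R₂₁⁻¹·D₁, and Ψ·D₂ = D₁·R₂₁⁻¹. -/
/-!
Write `C = Tr₍₁₎Ψ` and `X ⋆ Y = Tr₍₂₎(X₁₂Y₂₃)`. After the realignment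
`X ↦ (X^{kd}_{ic})_{(k,i),(c,d)}` the skew product `⋆` becomes the matrix product, so it is
associative with unit `P`, and skew invertibility says that `R` and `Ψ` are mutually inverse
for `⋆`. Apply `Tr₍₁₎(C₁ ·)` to the braid relation `R₂₃⁻¹R₁₂R₂₃ = R₁₂R₂₃R₁₂⁻¹`: the left side
gives `I`, since `Tr₍₁₎(C₁R₁₂) = Tr₍₁₎(Ψ ⋆ R) = I`, and the right side is `((R₂₁ ⋆ R⁻¹C₁)P) ⋆ R`.
Cancelling `R` gives `(R₂₁ ⋆ R⁻¹C₁)P = I ⋆ Ψ = C₂`, and since `P = R₂₁ ⋆ Ψ₂₁`, cancelling `R₂₁`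
gives `R⁻¹C₁ = C₂Ψ₂₁`, the first identity conjugated by `P`. The other three follow by applying
the first to `Rᵀ` and to `R₂₁`, which inherit invertibility, skew invertibility and the
Yang–Baxter equation.
-/

open scoped BigOperators

namespace BMWPaper

noncomputable section

/-- Operators on `V ⊗ V`, `V = ι → ℂ`, as matrices indexed by pairs. -/
abbrev Op (ι : Type*) := Matrix (ι × ι) (ι × ι) ℂ

/-- Operators on `V ⊗ V ⊗ V` as matrices indexed by triples. -/
abbrev Op3 (ι : Type*) := Matrix (ι × ι × ι) (ι × ι × ι) ℂ

variable {ι : Type*} [Fintype ι] [DecidableEq ι]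

/-- `M₁₂ = M ⊗ I`. -/
def op12 (M : Op ι) : Op3 ι :=
  Matrix.of fun p q => M (p.1, p.2.1) (q.1, q.2.1) * (if p.2.2 = q.2.2 then 1 else 0)

/-- `M₂₃ = I ⊗ M`. -/
def op23 (M : Op ι) : Op3 ι :=
  Matrix.of fun p q => (if p.1 = q.1 then 1 else 0) * M (p.2.1, p.2.2) (q.2.1, q.2.2)

/-- The permutation operator `P`, `P^{kl}_{ij} = δ^k_j δ^l_i`. -/
def Pmat (ι : Type*) [DecidableEq ι] : Op ι :=
  Matrix.of fun p q => if p.1 = q.2 ∧ p.2 = q.1 then (1 : ℂ) else 0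

/-- Partial trace over the first factor: `(Tr₍₁₎M)^l_j = ∑_a M^{al}_{aj}`. -/
def tr1 (M : Op ι) : Matrix ι ι ℂ := Matrix.of fun l j => ∑ a, M (a, l) (a, j)

/-- Partial trace over the second factor: `(Tr₍₂₎M)^k_i = ∑_a M^{ka}_{ia}`. -/
def tr2 (M : Op ι) : Matrix ι ι ℂ := Matrix.of fun k i => ∑ a, M (k, a) (i, a)

/-- Partial trace over the middle factor of an operator on `V ⊗ V ⊗ V`. -/
def tr2of3 (M : Op3 ι) : Op ι :=
  Matrix.of fun p q => ∑ a, M (p.1, a, p.2) (q.1, a, q.2)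

/-- `U₁ = U ⊗ I` for an `N×N` matrix `U`. -/
def u1 (U : Matrix ι ι ℂ) : Op ι :=
  Matrix.of fun p q => U p.1 q.1 * (if p.2 = q.2 then 1 else 0)

/-- `U₂ = I ⊗ U` for an `N×N` matrix `U`. -/
def u2 (U : Matrix ι ι ℂ) : Op ι :=
  Matrix.of fun p q => (if p.1 = q.1 then 1 else 0) * U p.2 q.2

/-- `Ψ` is a skew inverse of `R`: `Tr₍₂₎(R₁₂Ψ₂₃) = P₁₃ = Tr₍₂₎(Ψ₁₂R₂₃)`. -/
def SkewInverse (R Ψ : Op ι) : Prop :=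
  tr2of3 (op12 R * op23 Ψ) = Pmat ι ∧ tr2of3 (op12 Ψ * op23 R) = Pmat ι

/-- The Yang–Baxter equation `R₁₂R₂₃R₁₂ = R₂₃R₁₂R₂₃`. -/
def YangBaxter (R : Op ι) : Prop :=
  op12 R * op23 R * op12 R = op23 R * op12 R * op23 R

/-- `K := λ⁻¹ν⁻¹(qI - R)(q⁻¹I + R)` with `λ := q - q⁻¹`. -/
def Kmat (q ν : ℂ) (R : Op ι) : Op ι :=
  ((q - q⁻¹)⁻¹ * ν⁻¹) • ((q • (1 : Op ι) - R) * (q⁻¹ • (1 : Op ι) + R))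

/-- `R` is a BMW type R-matrix with parameters `(q, ν)`: `R` is invertible, satisfies
the Yang–Baxter equation, and with `K := Kmat q ν R` the relations
`RK = KR = νK`, `K₂₃R₁₂K₂₃ = ν⁻¹K₂₃` and `K₂₃R₁₂⁻¹K₂₃ = νK₂₃` hold. -/
def BMWType (q ν : ℂ) (R : Op ι) : Prop :=
  IsUnit R ∧ YangBaxter R ∧
  R * Kmat q ν R = ν • Kmat q ν R ∧
  Kmat q ν R * R = ν • Kmat q ν R ∧
  op23 (Kmat q ν R) * op12 R * op23 (Kmat q ν R) = ν⁻¹ • op23 (Kmat q ν R) ∧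
  op23 (Kmat q ν R) * op12 R⁻¹ * op23 (Kmat q ν R) = ν • op23 (Kmat q ν R)

end

section

open scoped Matrix

variable {ι : Type*}

def realign (X : Op ι) : Op ι :=
  Matrix.of fun p q => X (p.1, q.2) (p.2, q.1)

/-- `X₂₁ = P X P`. -/
def op21 (X : Op ι) : Op ι :=
  X.submatrix (Equiv.prodComm ι ι) (Equiv.prodComm ι ι)

lemma realign_injective : Function.Injective (realign : Op ι → Op ι) := by
  intro X Y h
  ext ⟨k, l⟩ ⟨i, j⟩
  simpa [realign] using congr_fun₂ h (k, i) (j, l)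

lemma op21_op21 (X : Op ι) : op21 (op21 X) = X := rfl

lemma op21_transpose (X : Op ι) : op21 Xᵀ = (op21 X)ᵀ := rfl

section DecidableEq

variable [DecidableEq ι]

lemma op21_u1 (U : Matrix ι ι ℂ) : op21 (u1 U) = u2 U := by
  ext ⟨k, l⟩ ⟨i, j⟩
  simp [op21, u1, u2, mul_comm]

lemma op21_u2 (U : Matrix ι ι ℂ) : op21 (u2 U) = u1 U := by
  rw [← op21_u1, op21_op21]

lemma op21_Pmat : op21 (Pmat ι) = Pmat ι := by
  ext ⟨k, l⟩ ⟨i, j⟩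
  simp [op21, Pmat, and_comm]

lemma Pmat_transpose : (Pmat ι)ᵀ = Pmat ι := by
  ext ⟨k, l⟩ ⟨i, j⟩
  simp [Pmat, eq_comm, and_comm]

lemma u1_transpose (U : Matrix ι ι ℂ) : u1 Uᵀ = (u1 U)ᵀ := by
  ext ⟨k, l⟩ ⟨i, j⟩
  simp [u1, eq_comm]

lemma u2_transpose (U : Matrix ι ι ℂ) : u2 Uᵀ = (u2 U)ᵀ := by
  ext ⟨k, l⟩ ⟨i, j⟩
  simp [u2, eq_comm]

lemma op12_transpose (X : Op ι) : op12 Xᵀ = (op12 X)ᵀ := by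
  ext ⟨k, l, m⟩ ⟨i, j, n⟩
  simp [op12, eq_comm]

lemma op23_transpose (X : Op ι) : op23 Xᵀ = (op23 X)ᵀ := by
  ext ⟨k, l, m⟩ ⟨i, j, n⟩
  simp [op23, eq_comm]

def reverse3 : Equiv.Perm (ι × ι × ι) :=
  ⟨fun p => (p.2.2, p.2.1, p.1), fun p => (p.2.2, p.2.1, p.1), fun _ => rfl, fun _ => rfl⟩

lemma op12_op21 (X : Op ι) : op12 (op21 X) = (op23 X).submatrix reverse3 reverse3 := by
  ext ⟨k, l, m⟩ ⟨i, j, n⟩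
  simp [op12, op23, op21, reverse3, mul_comm]

lemma op23_op21 (X : Op ι) : op23 (op21 X) = (op12 X).submatrix reverse3 reverse3 := by
  ext ⟨k, l, m⟩ ⟨i, j, n⟩
  simp [op12, op23, op21, reverse3, mul_comm]

lemma realign_Pmat : realign (Pmat ι) = 1 := by
  ext ⟨k, i⟩ ⟨c, d⟩
  simp [realign, Pmat, Matrix.one_apply, Prod.ext_iff, eq_comm]

lemma u1_one : u1 (1 : Matrix ι ι ℂ) = 1 := by
  ext ⟨k, l⟩ ⟨i, j⟩
  simp [u1, Matrix.one_apply, Prod.ext_iff, ← ite_and, and_comm]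

lemma op12_one : op12 (1 : Op ι) = 1 := by
  ext ⟨k, l, m⟩ ⟨i, j, n⟩
  simp only [op12, Matrix.of_apply, Matrix.one_apply, Prod.ext_iff]
  grind

lemma op23_one : op23 (1 : Op ι) = 1 := by
  ext ⟨k, l, m⟩ ⟨i, j, n⟩
  simp only [op23, Matrix.of_apply, Matrix.one_apply, Prod.ext_iff]
  grind

end DecidableEq

variable [Fintype ι]

/-- `Tr₍₂₎(X₁₂Y₂₃)`, as an operator on the two outer factors. -/
def skewMul (X Y : Op ι) : Op ι :=
  Matrix.of fun p q => ∑ a, ∑ b, X (p.1, a) (q.1, b) * Y (b, p.2) (a, q.2)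

def tr1of3 (M : Op3 ι) : Op ι :=
  Matrix.of fun p q => ∑ a, M (a, p.1, p.2) (a, q.1, q.2)

lemma realign_skewMul (X Y : Op ι) : realign (skewMul X Y) = realign X * realign Y := by
  ext ⟨k, i⟩ ⟨c, d⟩
  simp only [realign, skewMul, Matrix.of_apply, Matrix.mul_apply, Fintype.sum_prod_type]
  exact Finset.sum_comm

lemma skewMul_op21 (X Y : Op ι) : skewMul (op21 X) (op21 Y) = op21 (skewMul Y X) := by
  ext ⟨k, l⟩ ⟨i, j⟩
  simp only [skewMul, op21, Matrix.submatrix_apply, Matrix.of_apply, Equiv.prodComm_apply,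
    Prod.swap]
  rw [Finset.sum_comm]
  simp [mul_comm]

lemma skewMul_transpose (X Y : Op ι) : skewMul Xᵀ Yᵀ = (skewMul X Y)ᵀ := by
  ext ⟨k, l⟩ ⟨i, j⟩
  exact Finset.sum_comm

lemma op21_mul (X Y : Op ι) : op21 (X * Y) = op21 X * op21 Y :=
  (Matrix.submatrix_mul_equiv _ _ _ _ _).symm

lemma tr1_op21 (X : Op ι) : tr1 (op21 X) = tr2 X := rfl

lemma tr1_transpose (X : Op ι) : tr1 Xᵀ = (tr1 X)ᵀ := rfl

variable [DecidableEq ι]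

lemma tr2of3_op12_mul_op23 (X Y : Op ι) : tr2of3 (op12 X * op23 Y) = skewMul X Y := by
  ext ⟨k, l⟩ ⟨i, j⟩
  simp [tr2of3, skewMul, op12, op23, Matrix.mul_apply, Fintype.sum_prod_type]

lemma skewInverse_iff {R Ψ : Op ι} :
    SkewInverse R Ψ ↔ skewMul R Ψ = Pmat ι ∧ skewMul Ψ R = Pmat ι := by
  simp only [SkewInverse, tr2of3_op12_mul_op23]

lemma skewMul_Pmat_right (X : Op ι) : skewMul X (Pmat ι) = X :=
  realign_injective (by rw [realign_skewMul, realign_Pmat, mul_one])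

lemma eq_skewMul_of_skewMul_eq_right {R Ψ X Y : Op ι} (h : skewMul R Ψ = Pmat ι)
    (hX : skewMul X R = Y) : X = skewMul Y Ψ := by
  apply realign_injective
  rw [← hX, realign_skewMul, realign_skewMul, mul_assoc, ← realign_skewMul, h, realign_Pmat,
    mul_one]

lemma eq_skewMul_of_skewMul_eq_left {R Ψ X Y : Op ι} (h : skewMul Ψ R = Pmat ι)
    (hX : skewMul R X = Y) : X = skewMul Ψ Y := by
  apply realign_injective
  rw [← hX, realign_skewMul, realign_skewMul, ← mul_assoc, ← realign_skewMul, h, realign_Pmat,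
    one_mul]

lemma skewMul_one_left (X : Op ι) : skewMul 1 X = u2 (tr1 X) := by
  ext ⟨k, l⟩ ⟨i, j⟩
  simp [skewMul, u2, tr1, Matrix.one_apply, Prod.ext_iff, ite_and, Finset.mul_sum]

lemma u2_mul_skewMul (U : Matrix ι ι ℂ) (X Y : Op ι) :
    u2 U * skewMul X Y = skewMul X (u2 U * Y) := by
  ext ⟨k, l⟩ ⟨i, j⟩
  simp [skewMul, u2, Matrix.mul_apply, Fintype.sum_prod_type, Finset.mul_sum, ite_mul]
  rw [Finset.sum_comm]
  refine Finset.sum_congr rfl fun a _ => ?_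
  rw [Finset.sum_comm]
  exact Finset.sum_congr rfl fun b _ => Finset.sum_congr rfl fun c _ => by ring

lemma skewMul_u2_mul (U : Matrix ι ι ℂ) (X Y : Op ι) :
    skewMul (u2 U * X) Y = skewMul X (Y * u1 U) := by
  ext ⟨k, l⟩ ⟨i, j⟩
  simp [skewMul, u1, u2, Matrix.mul_apply, Fintype.sum_prod_type, Finset.mul_sum, Finset.sum_mul,
    ite_mul]
  rw [Finset.sum_comm_cycle]
  refine Finset.sum_congr rfl fun a _ => ?_
  rw [Finset.sum_comm]
  exact Finset.sum_congr rfl fun b _ => Finset.sum_congr rfl fun c _ => by ring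

lemma tr1_u1_tr1_mul (Ψ X : Op ι) : tr1 (u1 (tr1 Ψ) * X) = tr1 (skewMul Ψ X) := by
  ext l j
  simp [tr1, skewMul, u1, Matrix.mul_apply, Fintype.sum_prod_type, Finset.sum_mul]
  exact Finset.sum_comm_cycle

lemma tr1_Pmat : tr1 (Pmat ι) = 1 := by
  ext l j
  simp [tr1, Pmat, Matrix.one_apply, ite_and, eq_comm]

lemma Pmat_mul_mul_Pmat (X : Op ι) : Pmat ι * X * Pmat ι = op21 X := by
  ext ⟨k, l⟩ ⟨i, j⟩
  simp [op21, Pmat, Matrix.mul_apply, Fintype.sum_prod_type, ite_and]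

lemma Pmat_mul_Pmat : Pmat ι * Pmat ι = 1 := by
  have h := Pmat_mul_mul_Pmat (1 : Op ι)
  rwa [mul_one, op21, Matrix.submatrix_one_equiv] at h

lemma mul_Pmat_apply (X : Op ι) (p q : ι × ι) : (X * Pmat ι) p q = X p q.swap := by
  simp [Pmat, Matrix.mul_apply, Fintype.sum_prod_type, ite_and]
  rfl

lemma op21_inv (X : Op ι) : op21 X⁻¹ = (op21 X)⁻¹ :=
  (Matrix.inv_submatrix_equiv _ _ _).symm

lemma isUnit_op21 {X : Op ι} (h : IsUnit X) : IsUnit (op21 X) :=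
  (Matrix.isUnit_submatrix_equiv _ _).2 h

lemma op12_mul (X Y : Op ι) : op12 X * op12 Y = op12 (X * Y) := by
  ext ⟨k, l, m⟩ ⟨i, j, n⟩
  simp [op12, Matrix.mul_apply, Fintype.sum_prod_type]

lemma op23_mul (X Y : Op ι) : op23 X * op23 Y = op23 (X * Y) := by
  ext ⟨k, l, m⟩ ⟨i, j, n⟩
  simp [op23, Matrix.mul_apply, Fintype.sum_prod_type, Finset.mul_sum]

lemma op12_u1_mul_op23_comm (U : Matrix ι ι ℂ) (X : Op ι) :
    op12 (u1 U) * op23 X = op23 X * op12 (u1 U) := by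
  ext ⟨k, l, m⟩ ⟨i, j, n⟩
  simp [op12, op23, u1, Matrix.mul_apply, Fintype.sum_prod_type, mul_comm]

lemma tr1of3_op12 (X : Op ι) : tr1of3 (op12 X) = u1 (tr1 X) := by
  ext ⟨l, m⟩ ⟨j, n⟩
  simp [tr1of3, op12, u1, tr1]

lemma tr1of3_op23_mul (X : Op ι) (M : Op3 ι) : tr1of3 (op23 X * M) = X * tr1of3 M := by
  ext ⟨l, m⟩ ⟨j, n⟩
  simp [tr1of3, op23, Matrix.mul_apply, Fintype.sum_prod_type, Finset.mul_sum]
  exact Finset.sum_comm_cycle.symm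

lemma tr1of3_mul_op23 (X : Op ι) (M : Op3 ι) : tr1of3 (M * op23 X) = tr1of3 M * X := by
  ext ⟨l, m⟩ ⟨j, n⟩
  simp [tr1of3, op23, Matrix.mul_apply, Fintype.sum_prod_type, Finset.sum_mul]
  exact Finset.sum_comm_cycle.symm

lemma tr1of3_op12_mul_op23_mul_op12 (X Y Z : Op ι) :
    tr1of3 (op12 X * op23 Y * op12 Z) = skewMul (skewMul (op21 X) Z * Pmat ι) Y := by
  ext ⟨l, m⟩ ⟨j, n⟩
  simp only [tr1of3, skewMul, Matrix.of_apply, mul_Pmat_apply]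
  simp [op21, op12, op23, Matrix.mul_apply, Fintype.sum_prod_type, Finset.sum_mul]
  calc _ = ∑ a, ∑ u, ∑ y, ∑ b, X (a, l) (b, y) * Y (y, m) (u, n) * Z (b, u) (a, j) :=
        Finset.sum_congr rfl fun _ _ => Finset.sum_comm_cycle.symm
    _ = ∑ u, ∑ a, ∑ y, ∑ b, X (a, l) (b, y) * Y (y, m) (u, n) * Z (b, u) (a, j) :=
        Finset.sum_comm
    _ = _ := Finset.sum_congr rfl fun _ _ => by
      rw [Finset.sum_comm]
      simp only [mul_right_comm _ (Y _ _)]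

lemma YangBaxter.transpose {R : Op ι} (h : YangBaxter R) : YangBaxter Rᵀ := by
  simpa only [YangBaxter, Matrix.transpose_mul, ← op12_transpose, ← op23_transpose,
    ← mul_assoc] using congrArg Matrix.transpose h

lemma YangBaxter.flip {R : Op ι} (h : YangBaxter R) : YangBaxter (op21 R) := by
  simp only [YangBaxter, op12_op21, op23_op21, Matrix.submatrix_mul_equiv]
  rw [h]

lemma SkewInverse.transpose {R Ψ : Op ι} (h : SkewInverse R Ψ) : SkewInverse Rᵀ Ψᵀ := by
  rw [skewInverse_iff] at h ⊢
  simp only [skewMul_transpose, h, Pmat_transpose, and_self]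

lemma SkewInverse.flip {R Ψ : Op ι} (h : SkewInverse R Ψ) : SkewInverse (op21 R) (op21 Ψ) := by
  rw [skewInverse_iff] at h ⊢
  simp only [skewMul_op21, h, op21_Pmat, and_self]

lemma inv_mul_mul_eq_mul_mul_inv_of_braid {G : Type*} [Group G] {a b : G}
    (h : a * b * a = b * a * b) : b⁻¹ * a * b = a * b * a⁻¹ := by
  calc b⁻¹ * a * b = b⁻¹ * (a * b * a) * a⁻¹ := by group
    _ = a * b * a⁻¹ := by rw [h]; group

lemma YangBaxter.op23_inv_mul_op12_mul_op23 {R : Op ι} (hR : IsUnit R) (hYB : YangBaxter R) :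
    op23 R⁻¹ * op12 R * op23 R = op12 R * op23 R * op12 R⁻¹ := by
  have hdet := (Matrix.isUnit_iff_isUnit_det R).mp hR
  let a : (Op3 ι)ˣ := ⟨op12 R, op12 R⁻¹, by rw [op12_mul, R.mul_nonsing_inv hdet, op12_one],
    by rw [op12_mul, R.nonsing_inv_mul hdet, op12_one]⟩
  let b : (Op3 ι)ˣ := ⟨op23 R, op23 R⁻¹, by rw [op23_mul, R.mul_nonsing_inv hdet, op23_one],
    by rw [op23_mul, R.nonsing_inv_mul hdet, op23_one]⟩
  exact congrArg Units.val (inv_mul_mul_eq_mul_mul_inv_of_braid (a := a) (b := b) (Units.ext hYB))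

lemma SkewInverse.skewMul_op21_inv_mul_u1_tr1 {R Ψ : Op ι} (hskew : SkewInverse R Ψ)
    (hR : IsUnit R) (hYB : YangBaxter R) :
    skewMul (op21 R) (R⁻¹ * u1 (tr1 Ψ)) = u2 (tr1 Ψ) * Pmat ι := by
  obtain ⟨hRΨ, hΨR⟩ := skewInverse_iff.1 hskew
  set C := tr1 Ψ
  have hleft : tr1of3 (op12 (u1 C) * (op23 R⁻¹ * op12 R * op23 R)) = 1 := by
    rw [← mul_assoc, ← mul_assoc, op12_u1_mul_op23_comm, mul_assoc (op23 _), op12_mul,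
      tr1of3_mul_op23, tr1of3_op23_mul, tr1of3_op12, tr1_u1_tr1_mul, hΨR, tr1_Pmat, u1_one,
      mul_one, R.nonsing_inv_mul ((Matrix.isUnit_iff_isUnit_det R).mp hR)]
  have hright : tr1of3 (op12 (u1 C) * (op12 R * op23 R * op12 R⁻¹)) =
      skewMul (skewMul (op21 R) (R⁻¹ * u1 C) * Pmat ι) R := by
    rw [← mul_assoc, ← mul_assoc, op12_mul, tr1of3_op12_mul_op23_mul_op12, op21_mul, op21_u1,
      skewMul_u2_mul]
  have hF : skewMul (op21 R) (R⁻¹ * u1 C) * Pmat ι = u2 C := by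
    rw [eq_skewMul_of_skewMul_eq_right hRΨ (hright.symm.trans (by
      rw [← hYB.op23_inv_mul_op12_mul_op23 hR, hleft])), skewMul_one_left]
  rw [← hF, mul_assoc, Pmat_mul_Pmat, mul_one]

theorem SkewInverse.u1_tr1_mul {R Ψ : Op ι} (hskew : SkewInverse R Ψ) (hR : IsUnit R)
    (hYB : YangBaxter R) : u1 (tr1 Ψ) * Ψ = (op21 R)⁻¹ * u2 (tr1 Ψ) := by
  have hΨR : skewMul (op21 Ψ) (op21 R) = Pmat ι := by
    rw [skewMul_op21, (skewInverse_iff.1 hskew).1, op21_Pmat]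
  have h21 : R⁻¹ * u1 (tr1 Ψ) = u2 (tr1 Ψ) * op21 Ψ := by
    rw [eq_skewMul_of_skewMul_eq_left hΨR (hskew.skewMul_op21_inv_mul_u1_tr1 hR hYB),
      ← u2_mul_skewMul, skewMul_Pmat_right]
  simpa only [op21_mul, op21_inv, op21_u1, op21_u2, op21_op21] using (congrArg op21 h21).symm

theorem SkewInverse.mul_u1_tr1 {R Ψ : Op ι} (hskew : SkewInverse R Ψ) (hR : IsUnit R)
    (hYB : YangBaxter R) : Ψ * u1 (tr1 Ψ) = u2 (tr1 Ψ) * (op21 R)⁻¹ := by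
  have h := hskew.transpose.u1_tr1_mul ((Matrix.isUnit_transpose R).2 hR) hYB.transpose
  rw [tr1_transpose, u1_transpose, u2_transpose, op21_transpose, ← Matrix.transpose_nonsing_inv,
    ← Matrix.transpose_mul, ← Matrix.transpose_mul] at h
  exact Matrix.transpose_injective h

theorem SkewInverse.u2_tr2_mul {R Ψ : Op ι} (hskew : SkewInverse R Ψ) (hR : IsUnit R)
    (hYB : YangBaxter R) : u2 (tr2 Ψ) * Ψ = (op21 R)⁻¹ * u1 (tr2 Ψ) := by
  have h := hskew.flip.u1_tr1_mul (isUnit_op21 hR) hYB.flip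
  simpa only [tr1_op21, op21_mul, op21_inv, op21_u1, op21_u2, op21_op21] using congrArg op21 h

theorem SkewInverse.mul_u2_tr2 {R Ψ : Op ι} (hskew : SkewInverse R Ψ) (hR : IsUnit R)
    (hYB : YangBaxter R) : Ψ * u2 (tr2 Ψ) = u1 (tr2 Ψ) * (op21 R)⁻¹ := by
  have h := hskew.flip.mul_u1_tr1 (isUnit_op21 hR) hYB.flip
  simpa only [tr1_op21, op21_mul, op21_inv, op21_u1, op21_u2, op21_op21] using congrArg op21 h

theorem stmt6_general {ι : Type*} [Fintype ι] [DecidableEq ι]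
    (R Ψ : Op ι) (hR : IsUnit R) (hYB : YangBaxter R) (hskew : SkewInverse R Ψ) :
    u1 (tr1 Ψ) * Ψ = (Pmat ι * R * Pmat ι)⁻¹ * u2 (tr1 Ψ) ∧
    Ψ * u1 (tr1 Ψ) = u2 (tr1 Ψ) * (Pmat ι * R * Pmat ι)⁻¹ ∧
    u2 (tr2 Ψ) * Ψ = (Pmat ι * R * Pmat ι)⁻¹ * u1 (tr2 Ψ) ∧
    Ψ * u2 (tr2 Ψ) = u1 (tr2 Ψ) * (Pmat ι * R * Pmat ι)⁻¹ := by
  rw [Pmat_mul_mul_Pmat]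
  exact ⟨hskew.u1_tr1_mul hR hYB, hskew.mul_u1_tr1 hR hYB, hskew.u2_tr2_mul hR hYB,
    hskew.mul_u2_tr2 hR hYB⟩

/-- Proposition 1: for an invertible skew-invertible R-matrix `R` with
skew inverse `Ψ`, `C := Tr₍₁₎Ψ`, `D := Tr₍₂₎Ψ`:
`C₁Ψ = R₂₁⁻¹C₂`, `ΨC₁ = C₂R₂₁⁻¹`, `D₂Ψ = R₂₁⁻¹D₁`, `ΨD₂ = D₁R₂₁⁻¹`. -/
theorem stmt6 {ι : Type*} [Fintype ι] [DecidableEq ι] [Nonempty ι]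
    (R Ψ : Op ι) (hR : IsUnit R) (hYB : YangBaxter R) (hskew : SkewInverse R Ψ) :
    u1 (tr1 Ψ) * Ψ = (Pmat ι * R * Pmat ι)⁻¹ * u2 (tr1 Ψ) ∧
    Ψ * u1 (tr1 Ψ) = u2 (tr1 Ψ) * (Pmat ι * R * Pmat ι)⁻¹ ∧
    u2 (tr2 Ψ) * Ψ = (Pmat ι * R * Pmat ι)⁻¹ * u1 (tr2 Ψ) ∧
    Ψ * u2 (tr2 Ψ) = u1 (tr2 Ψ) * (Pmat ι * R * Pmat ι)⁻¹ :=
  stmt6_general R Ψ hR hYB hskew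

end

end BMWPaper
end

section
/- (Corollary to Proposition 1) Let R be an invertible skew-invertible matrix on V⊗V satisfying the Yang–Baxter equation R₁₂R₂₃R₁₂ = R₂₃R₁₂R₂₃, with skew inverse Ψ, and set C := Tr₍₁₎Ψ, D := Tr₍₂₎Ψ. Then Tr₍₂₎(C₂·R₂₁⁻¹) = Tr₍₂₎(D₂·R⁻¹) = C·D = D·C. -/
open scoped BigOperators

namespace BMWPaper

noncomputable section

variable {ι : Type*} [Fintype ι] [DecidableEq ι]

/-! ### Auxiliary lemmas for Statement 7 -/

variable (R Ψ : Op ι)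

lemma sum_swap_blocks {α β : Type*} [Fintype α] [Fintype β] (H : α → β → ℂ) :
    (∑ a, ∑ b, H a b) = ∑ b, ∑ a, H a b := Finset.sum_comm

omit [DecidableEq ι] in
lemma sc_2_3 (H : ι → ι → ι → ι → ι → ℂ) :
    (∑ m, ∑ n, ∑ b, ∑ d, ∑ e, H m n b d e) = ∑ b, ∑ d, ∑ e, ∑ m, ∑ n, H m n b d e := by
  have := sum_swap_blocks (α := ι×ι) (β := ι×ι×ι) (fun x y => H x.1 x.2 y.1 y.2.1 y.2.2)
  simpa [Fintype.sum_prod_type] using this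

omit [DecidableEq ι] in
lemma sc_2_5 (H : ι → ι → ι → ι → ι → ι → ι → ℂ) :
    (∑ k, ∑ i, ∑ m, ∑ n, ∑ b, ∑ e, ∑ f, H k i m n b e f) =
      ∑ m, ∑ n, ∑ b, ∑ e, ∑ f, ∑ k, ∑ i, H k i m n b e f := by
  have := sum_swap_blocks (α := ι×ι) (β := ι×ι×ι×ι×ι)
    (fun x y => H x.1 x.2 y.1 y.2.1 y.2.2.1 y.2.2.2.1 y.2.2.2.2)
  simpa [Fintype.sum_prod_type] using this

omit [DecidableEq ι] in
lemma sc_2_2 (H : ι → ι → ι → ι → ℂ) :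
    (∑ m, ∑ f, ∑ a, ∑ y, H m f a y) = ∑ a, ∑ y, ∑ m, ∑ f, H m f a y := by
  have := sum_swap_blocks (α := ι×ι) (β := ι×ι) (fun x y => H x.1 x.2 y.1 y.2)
  simpa [Fintype.sum_prod_type] using this

omit [DecidableEq ι] in
lemma sc_mn_f (H : ι → ι → ι → ℂ) :
    (∑ m, ∑ n, ∑ f, H m n f) = ∑ f, ∑ m, ∑ n, H m n f := by
  have := sum_swap_blocks (α := ι×ι) (β := ι) (fun x y => H x.1 x.2 y)
  simpa [Fintype.sum_prod_type] using this

omit [DecidableEq ι] in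
lemma r6 (H : ι → ι → ι → ι → ι → ι → ℂ) :
    (∑ m, ∑ f, ∑ j, ∑ n, ∑ p, ∑ g, H m f j n p g) =
      ∑ g, ∑ p, ∑ j, ∑ f, ∑ m, ∑ n, H m f j n p g := by
  calc (∑ m, ∑ f, ∑ j, ∑ n, ∑ p, ∑ g, H m f j n p g)
      = ∑ j, ∑ n, ∑ p, ∑ g, ∑ m, ∑ f, H m f j n p g := by
        have := sum_swap_blocks (α := ι×ι) (β := ι×ι×ι×ι)
          (fun x y => H x.1 x.2 y.1 y.2.1 y.2.2.1 y.2.2.2)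
        simpa [Fintype.sum_prod_type] using this
    _ = ∑ j, ∑ p, ∑ g, ∑ m, ∑ f, ∑ n, H m f j n p g := by
        refine Finset.sum_congr rfl fun j _ => ?_
        have := sum_swap_blocks (α := ι) (β := ι×ι×ι×ι)
          (fun n y => H y.2.2.1 y.2.2.2 j n y.1 y.2.1)
        simpa [Fintype.sum_prod_type] using this
    _ = ∑ p, ∑ g, ∑ j, ∑ m, ∑ f, ∑ n, H m f j n p g := by
        have := sum_swap_blocks (α := ι) (β := ι×ι)
          (fun j y => ∑ m, ∑ f, ∑ n, H m f j n y.1 y.2)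
        simpa [Fintype.sum_prod_type] using this
    _ = ∑ g, ∑ p, ∑ j, ∑ m, ∑ f, ∑ n, H m f j n p g := Finset.sum_comm
    _ = ∑ g, ∑ p, ∑ j, ∑ f, ∑ m, ∑ n, H m f j n p g := by
        refine Finset.sum_congr rfl fun g _ => Finset.sum_congr rfl fun p _ =>
          Finset.sum_congr rfl fun j _ => Finset.sum_comm

section Steps
variable (hA : ∀ k l i j : ι, (∑ a, ∑ y, R (k,a) (i,y) * Ψ (y,l) (a,j)) = if k = j ∧ l = i then 1 else 0)
variable (hB : ∀ k l i j : ι, (∑ a, ∑ y, Ψ (k,a) (i,y) * R (y,l) (a,j)) = if k = j ∧ l = i then 1 else 0)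
variable (hY : ∀ k l m i j n : ι,
      (∑ b, ∑ d, ∑ e, R (k,l) (d,b) * R (b,m) (e,n) * R (d,e) (i,j)) =
      ∑ b, ∑ e, ∑ f, R (l,m) (b,f) * R (k,b) (i,e) * R (e,f) (j,n))

include hA hY in
lemma S1 (k l p q i j : ι) :
    (∑ m, ∑ n, ∑ b, ∑ e, ∑ f, R (l,m) (b,f) * R (k,b) (i,e) * R (e,f) (j,n) * Ψ (n,p) (m,q)) =
    ∑ d, R (k,l) (d,q) * R (d,p) (i,j) := by
  calc (∑ m, ∑ n, ∑ b, ∑ e, ∑ f, R (l,m) (b,f) * R (k,b) (i,e) * R (e,f) (j,n) * Ψ (n,p) (m,q))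
      = ∑ m, ∑ n, ∑ b, ∑ d, ∑ e,
          R (k,l) (d,b) * R (b,m) (e,n) * R (d,e) (i,j) * Ψ (n,p) (m,q) := by
        refine Finset.sum_congr rfl fun m _ => Finset.sum_congr rfl fun n _ => ?_
        have h1 : (∑ b, ∑ e, ∑ f, R (l,m) (b,f) * R (k,b) (i,e) * R (e,f) (j,n) * Ψ (n,p) (m,q)) =
            (∑ b, ∑ e, ∑ f, R (l,m) (b,f) * R (k,b) (i,e) * R (e,f) (j,n)) * Ψ (n,p) (m,q) := by
          simp only [Finset.sum_mul]
        rw [h1, ← hY k l m i j n]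
        simp only [Finset.sum_mul]
    _ = ∑ b, ∑ d, ∑ e, ∑ m, ∑ n,
          R (k,l) (d,b) * R (b,m) (e,n) * R (d,e) (i,j) * Ψ (n,p) (m,q) := sc_2_3 _
    _ = ∑ b, ∑ d, ∑ e, R (k,l) (d,b) * R (d,e) (i,j) *
          ∑ m, ∑ n, R (b,m) (e,n) * Ψ (n,p) (m,q) := by
        refine Finset.sum_congr rfl fun b _ => Finset.sum_congr rfl fun d _ =>
          Finset.sum_congr rfl fun e _ => ?_
        simp only [Finset.mul_sum]
        exact Finset.sum_congr rfl fun m _ => Finset.sum_congr rfl fun n _ => by ring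
    _ = ∑ b, ∑ d, ∑ e, R (k,l) (d,b) * R (d,e) (i,j) *
          (if b = q ∧ p = e then 1 else 0) := by
        refine Finset.sum_congr rfl fun b _ => Finset.sum_congr rfl fun d _ =>
          Finset.sum_congr rfl fun e _ => ?_
        rw [hA b p e q]
    _ = ∑ d, R (k,l) (d,q) * R (d,p) (i,j) := by
        rw [Finset.sum_comm]
        simp [ite_and, mul_ite, Finset.sum_ite_irrel, Finset.sum_const_zero,
          Finset.sum_ite_eq, Finset.sum_ite_eq']

include hA hB hY in
lemma S2 (r s l p q j : ι) :
    (∑ k, ∑ i, Ψ (r,i) (s,k) * ∑ d, R (k,l) (d,q) * R (d,p) (i,j)) =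
    ∑ f, ∑ m, ∑ n, R (l,m) (s,f) * R (r,f) (j,n) * Ψ (n,p) (m,q) := by
  calc (∑ k, ∑ i, Ψ (r,i) (s,k) * ∑ d, R (k,l) (d,q) * R (d,p) (i,j))
      = ∑ k, ∑ i, ∑ m, ∑ n, ∑ b, ∑ e, ∑ f,
          Ψ (r,i) (s,k) * (R (l,m) (b,f) * R (k,b) (i,e) * R (e,f) (j,n) * Ψ (n,p) (m,q)) := by
        refine Finset.sum_congr rfl fun k _ => Finset.sum_congr rfl fun i _ => ?_
        rw [← S1 R Ψ hA hY k l p q i j]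
        simp only [Finset.mul_sum]
    _ = ∑ m, ∑ n, ∑ b, ∑ e, ∑ f, ∑ k, ∑ i,
          Ψ (r,i) (s,k) * (R (l,m) (b,f) * R (k,b) (i,e) * R (e,f) (j,n) * Ψ (n,p) (m,q)) :=
        sc_2_5 _
    _ = ∑ m, ∑ n, ∑ b, ∑ e, ∑ f,
          R (l,m) (b,f) * R (e,f) (j,n) * Ψ (n,p) (m,q) *
            (∑ i, ∑ k, Ψ (r,i) (s,k) * R (k,b) (i,e)) := by
        refine Finset.sum_congr rfl fun m _ => Finset.sum_congr rfl fun n _ =>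
          Finset.sum_congr rfl fun b _ => Finset.sum_congr rfl fun e _ =>
          Finset.sum_congr rfl fun f _ => ?_
        rw [Finset.sum_comm]
        simp only [Finset.mul_sum]
        exact Finset.sum_congr rfl fun i _ => Finset.sum_congr rfl fun k _ => by ring
    _ = ∑ m, ∑ n, ∑ b, ∑ e, ∑ f,
          R (l,m) (b,f) * R (e,f) (j,n) * Ψ (n,p) (m,q) *
            (if r = e ∧ b = s then 1 else 0) := by
        refine Finset.sum_congr rfl fun m _ => Finset.sum_congr rfl fun n _ =>
          Finset.sum_congr rfl fun b _ => Finset.sum_congr rfl fun e _ =>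
          Finset.sum_congr rfl fun f _ => ?_
        rw [hB r b s e]
    _ = ∑ m, ∑ n, ∑ f, R (l,m) (s,f) * R (r,f) (j,n) * Ψ (n,p) (m,q) := by
        refine Finset.sum_congr rfl fun m _ => Finset.sum_congr rfl fun n _ => ?_
        simp [ite_and, mul_ite, Finset.sum_ite_irrel, Finset.sum_const_zero,
          Finset.sum_ite_eq, Finset.sum_ite_eq']
    _ = ∑ f, ∑ m, ∑ n, R (l,m) (s,f) * R (r,f) (j,n) * Ψ (n,p) (m,q) := sc_mn_f _


include hA hB hY in
lemma S3 (r s l q g h : ι) :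
    (∑ p, ∑ j, (∑ f, ∑ m, ∑ n, R (l,m) (s,f) * R (r,f) (j,n) * Ψ (n,p) (m,q)) * Ψ (j,g) (p,h)) =
    ∑ k, Ψ (r,g) (s,k) * R (k,l) (h,q) := by
  calc (∑ p, ∑ j, (∑ f, ∑ m, ∑ n, R (l,m) (s,f) * R (r,f) (j,n) * Ψ (n,p) (m,q)) * Ψ (j,g) (p,h))
      = ∑ p, ∑ j, ∑ k, ∑ i, ∑ d,
          Ψ (r,i) (s,k) * R (k,l) (d,q) * R (d,p) (i,j) * Ψ (j,g) (p,h) := by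
        refine Finset.sum_congr rfl fun p _ => Finset.sum_congr rfl fun j _ => ?_
        rw [← S2 R Ψ hA hB hY r s l p q j]
        simp only [Finset.sum_mul, Finset.mul_sum]
        refine Finset.sum_congr rfl fun k _ => Finset.sum_congr rfl fun i _ =>
          Finset.sum_congr rfl fun d _ => by ring
    _ = ∑ k, ∑ i, ∑ d, ∑ p, ∑ j,
          Ψ (r,i) (s,k) * R (k,l) (d,q) * R (d,p) (i,j) * Ψ (j,g) (p,h) := sc_2_3 _
    _ = ∑ k, ∑ i, ∑ d, Ψ (r,i) (s,k) * R (k,l) (d,q) *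
          ∑ p, ∑ j, R (d,p) (i,j) * Ψ (j,g) (p,h) := by
        refine Finset.sum_congr rfl fun k _ => Finset.sum_congr rfl fun i _ =>
          Finset.sum_congr rfl fun d _ => ?_
        simp only [Finset.mul_sum]
        exact Finset.sum_congr rfl fun p _ => Finset.sum_congr rfl fun j _ => by ring
    _ = ∑ k, ∑ i, ∑ d, Ψ (r,i) (s,k) * R (k,l) (d,q) * (if d = h ∧ g = i then 1 else 0) := by
        refine Finset.sum_congr rfl fun k _ => Finset.sum_congr rfl fun i _ =>
          Finset.sum_congr rfl fun d _ => ?_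
        rw [hA d g i h]
    _ = ∑ k, Ψ (r,g) (s,k) * R (k,l) (h,q) := by
        simp [ite_and, mul_ite, Finset.sum_ite_irrel, Finset.sum_const_zero,
          Finset.sum_ite_eq, Finset.sum_ite_eq']

include hA hB hY in
lemma S4 (y a r q : ι) :
    (∑ m, ∑ f, R (y,m) (a,f) *
        ∑ j, ∑ n, ∑ p, R (r,f) (j,n) * (∑ g, Ψ (j,g) (p,g)) * Ψ (n,p) (m,q)) =
    if r = q ∧ y = a then 1 else 0 := by
  calc (∑ m, ∑ f, R (y,m) (a,f) *
        ∑ j, ∑ n, ∑ p, R (r,f) (j,n) * (∑ g, Ψ (j,g) (p,g)) * Ψ (n,p) (m,q))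
      = ∑ m, ∑ f, ∑ j, ∑ n, ∑ p, ∑ g,
          R (y,m) (a,f) * R (r,f) (j,n) * Ψ (n,p) (m,q) * Ψ (j,g) (p,g) := by
        refine Finset.sum_congr rfl fun m _ => Finset.sum_congr rfl fun f _ => ?_
        simp only [Finset.mul_sum, Finset.sum_mul]
        refine Finset.sum_congr rfl fun j _ => Finset.sum_congr rfl fun n _ =>
          Finset.sum_congr rfl fun p _ => Finset.sum_congr rfl fun g _ => by ring
    _ = ∑ g, ∑ p, ∑ j, ∑ f, ∑ m, ∑ n,
          R (y,m) (a,f) * R (r,f) (j,n) * Ψ (n,p) (m,q) * Ψ (j,g) (p,g) := r6 _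
    _ = ∑ g, ∑ p, ∑ j,
          (∑ f, ∑ m, ∑ n, R (y,m) (a,f) * R (r,f) (j,n) * Ψ (n,p) (m,q)) * Ψ (j,g) (p,g) := by
        refine Finset.sum_congr rfl fun g _ => Finset.sum_congr rfl fun p _ =>
          Finset.sum_congr rfl fun j _ => ?_
        simp only [Finset.sum_mul]
    _ = ∑ g, ∑ k, Ψ (r,g) (a,k) * R (k,y) (g,q) := by
        refine Finset.sum_congr rfl fun g _ => ?_
        exact S3 R Ψ hA hB hY r a y q g g
    _ = if r = q ∧ y = a then 1 else 0 := hB r y a q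

include hA hB hY in
lemma core' (r w z q : ι) :
    (∑ j, ∑ n, ∑ p, R (r,w) (j,n) * (∑ g, Ψ (j,g) (p,g)) * Ψ (n,p) (z,q)) =
    (if r = q then 1 else 0) * (∑ g, Ψ (w,g) (z,g)) := by
  calc (∑ j, ∑ n, ∑ p, R (r,w) (j,n) * (∑ g, Ψ (j,g) (p,g)) * Ψ (n,p) (z,q))
      = ∑ m, ∑ f, (if w = f ∧ m = z then 1 else 0) *
          ∑ j, ∑ n, ∑ p, R (r,f) (j,n) * (∑ g, Ψ (j,g) (p,g)) * Ψ (n,p) (m,q) := by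
        symm
        simp [ite_and, ite_mul, Finset.sum_ite_irrel, Finset.sum_const_zero,
          Finset.sum_ite_eq, Finset.sum_ite_eq']
    _ = ∑ m, ∑ f, (∑ i, ∑ k, Ψ (w,i) (z,k) * R (k,m) (i,f)) *
          ∑ j, ∑ n, ∑ p, R (r,f) (j,n) * (∑ g, Ψ (j,g) (p,g)) * Ψ (n,p) (m,q) := by
        refine Finset.sum_congr rfl fun m _ => Finset.sum_congr rfl fun f _ => ?_
        rw [hB w m z f]
    _ = ∑ m, ∑ f, ∑ i, ∑ k, Ψ (w,i) (z,k) *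
          (R (k,m) (i,f) * ∑ j, ∑ n, ∑ p, R (r,f) (j,n) * (∑ g, Ψ (j,g) (p,g)) * Ψ (n,p) (m,q)) := by
        refine Finset.sum_congr rfl fun m _ => Finset.sum_congr rfl fun f _ => ?_
        simp only [Finset.sum_mul]
        refine Finset.sum_congr rfl fun i _ => Finset.sum_congr rfl fun k _ => by ring
    _ = ∑ i, ∑ k, ∑ m, ∑ f, Ψ (w,i) (z,k) *
          (R (k,m) (i,f) * ∑ j, ∑ n, ∑ p, R (r,f) (j,n) * (∑ g, Ψ (j,g) (p,g)) * Ψ (n,p) (m,q)) :=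
        sc_2_2 _
    _ = ∑ i, ∑ k, Ψ (w,i) (z,k) *
          ∑ m, ∑ f, R (k,m) (i,f) * ∑ j, ∑ n, ∑ p, R (r,f) (j,n) * (∑ g, Ψ (j,g) (p,g)) * Ψ (n,p) (m,q) := by
        refine Finset.sum_congr rfl fun i _ => Finset.sum_congr rfl fun k _ => ?_
        simp only [Finset.mul_sum]
    _ = ∑ i, ∑ k, Ψ (w,i) (z,k) * (if r = q ∧ k = i then 1 else 0) := by
        refine Finset.sum_congr rfl fun i _ => Finset.sum_congr rfl fun k _ => ?_
        rw [S4 R Ψ hA hB hY k i r q]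
    _ = (if r = q then 1 else 0) * (∑ g, Ψ (w,g) (z,g)) := by
        simp [ite_and, mul_ite, Finset.sum_ite_irrel, Finset.sum_const_zero,
          Finset.sum_ite_eq, Finset.sum_ite_eq', Finset.mul_sum]

omit [DecidableEq ι] in
lemma sc_rev3 (H : ι → ι → ι → ℂ) :
    (∑ b, ∑ d, ∑ e, H b d e) = ∑ e, ∑ d, ∑ b, H b d e := by
  calc (∑ b, ∑ d, ∑ e, H b d e)
      = ∑ e, ∑ b, ∑ d, H b d e := by
        have := sum_swap_blocks (α := ι×ι) (β := ι) (fun x e => H x.1 x.2 e)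
        simpa [Fintype.sum_prod_type] using this
    _ = ∑ e, ∑ d, ∑ b, H b d e :=
        Finset.sum_congr rfl fun e _ => Finset.sum_comm

include hA hB hY in
lemma coreSwap (r w z q : ι) :
    (∑ j, ∑ n, ∑ p, R (w,r) (n,j) * (∑ g, Ψ (g,j) (g,p)) * Ψ (p,n) (q,z)) =
    (if r = q then 1 else 0) * (∑ g, Ψ (g,w) (g,z)) := by
  have hAs : ∀ k l i j : ι,
      (∑ a, ∑ y, R (a,k) (y,i) * Ψ (l,y) (j,a)) = if k = j ∧ l = i then 1 else 0 := by
    intro k l i j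
    calc (∑ a, ∑ y, R (a,k) (y,i) * Ψ (l,y) (j,a))
        = ∑ a, ∑ y, R (y,k) (a,i) * Ψ (l,a) (j,y) := Finset.sum_comm
      _ = ∑ a, ∑ y, Ψ (l,a) (j,y) * R (y,k) (a,i) :=
          Finset.sum_congr rfl fun a _ => Finset.sum_congr rfl fun y _ => mul_comm _ _
      _ = if l = i ∧ k = j then 1 else 0 := hB l k j i
      _ = if k = j ∧ l = i then 1 else 0 := by
          by_cases h1 : k = j <;> by_cases h2 : l = i <;> simp [h1, h2]
  have hBs : ∀ k l i j : ι,
      (∑ a, ∑ y, Ψ (a,k) (y,i) * R (l,y) (j,a)) = if k = j ∧ l = i then 1 else 0 := by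
    intro k l i j
    calc (∑ a, ∑ y, Ψ (a,k) (y,i) * R (l,y) (j,a))
        = ∑ a, ∑ y, Ψ (y,k) (a,i) * R (l,a) (j,y) := Finset.sum_comm
      _ = ∑ a, ∑ y, R (l,a) (j,y) * Ψ (y,k) (a,i) :=
          Finset.sum_congr rfl fun a _ => Finset.sum_congr rfl fun y _ => mul_comm _ _
      _ = if l = i ∧ k = j then 1 else 0 := hA l k j i
      _ = if k = j ∧ l = i then 1 else 0 := by
          by_cases h1 : k = j <;> by_cases h2 : l = i <;> simp [h1, h2]
  have hYs : ∀ k l m i j n : ι,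
      (∑ b, ∑ d, ∑ e, R (l,k) (b,d) * R (m,b) (n,e) * R (e,d) (j,i)) =
      ∑ b, ∑ e, ∑ f, R (m,l) (f,b) * R (b,k) (e,i) * R (f,e) (n,j) := by
    intro k l m i j n
    calc (∑ b, ∑ d, ∑ e, R (l,k) (b,d) * R (m,b) (n,e) * R (e,d) (j,i))
        = ∑ b, ∑ e, ∑ d, R (l,k) (b,d) * R (m,b) (n,e) * R (e,d) (j,i) :=
          Finset.sum_congr rfl fun b _ => Finset.sum_comm
      _ = ∑ b, ∑ e, ∑ f, R (l,k) (b,f) * R (m,b) (n,e) * R (e,f) (j,i) := rfl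
      _ = ∑ b, ∑ d, ∑ e, R (m,l) (d,b) * R (b,k) (e,i) * R (d,e) (n,j) :=
          (hY m l k n j i).symm
      _ = ∑ b, ∑ e, ∑ d, R (m,l) (d,b) * R (b,k) (e,i) * R (d,e) (n,j) :=
          Finset.sum_congr rfl fun b _ => Finset.sum_comm
      _ = ∑ b, ∑ e, ∑ f, R (m,l) (f,b) * R (b,k) (e,i) * R (f,e) (n,j) := rfl
  have := core' (Matrix.of fun p q => R (p.2,p.1) (q.2,q.1))
      (Matrix.of fun p q => Ψ (p.2,p.1) (q.2,q.1))
      (fun k l i j => hAs k l i j) (fun k l i j => hBs k l i j)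
      (fun k l m i j n => hYs k l m i j n) r w z q
  simpa using this

include hA hB hY in
lemma coreTrans (r w z q : ι) :
    (∑ j, ∑ n, ∑ p, R (j,n) (r,w) * (∑ g, Ψ (p,g) (j,g)) * Ψ (z,q) (n,p)) =
    (if r = q then 1 else 0) * (∑ g, Ψ (z,g) (w,g)) := by
  have hAt : ∀ k l i j : ι,
      (∑ a, ∑ y, R (i,y) (k,a) * Ψ (a,j) (y,l)) = if k = j ∧ l = i then 1 else 0 := by
    intro k l i j
    calc (∑ a, ∑ y, R (i,y) (k,a) * Ψ (a,j) (y,l))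
        = ∑ a, ∑ y, R (i,a) (k,y) * Ψ (y,j) (a,l) := Finset.sum_comm
      _ = if i = l ∧ j = k then 1 else 0 := hA i j k l
      _ = if k = j ∧ l = i then 1 else 0 := by
          by_cases h1 : k = j <;> by_cases h2 : l = i <;>
            simp [h1, h2, eq_comm, and_comm]
  have hBt : ∀ k l i j : ι,
      (∑ a, ∑ y, Ψ (i,y) (k,a) * R (a,j) (y,l)) = if k = j ∧ l = i then 1 else 0 := by
    intro k l i j
    calc (∑ a, ∑ y, Ψ (i,y) (k,a) * R (a,j) (y,l))
        = ∑ a, ∑ y, Ψ (i,a) (k,y) * R (y,j) (a,l) := Finset.sum_comm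
      _ = if i = l ∧ j = k then 1 else 0 := hB i j k l
      _ = if k = j ∧ l = i then 1 else 0 := by
          by_cases h1 : k = j <;> by_cases h2 : l = i <;>
            simp [h1, h2, eq_comm, and_comm]
  have hYt : ∀ k l m i j n : ι,
      (∑ b, ∑ d, ∑ e, R (d,b) (k,l) * R (e,n) (b,m) * R (i,j) (d,e)) =
      ∑ b, ∑ e, ∑ f, R (b,f) (l,m) * R (i,e) (k,b) * R (j,n) (e,f) := by
    intro k l m i j n
    calc (∑ b, ∑ d, ∑ e, R (d,b) (k,l) * R (e,n) (b,m) * R (i,j) (d,e))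
        = ∑ e, ∑ d, ∑ b, R (d,b) (k,l) * R (e,n) (b,m) * R (i,j) (d,e) := sc_rev3 _
      _ = ∑ b, ∑ d, ∑ e, R (i,j) (d,b) * R (b,n) (e,m) * R (d,e) (k,l) := by
          refine Finset.sum_congr rfl fun b _ => Finset.sum_congr rfl fun d _ =>
            Finset.sum_congr rfl fun e _ => by ring
      _ = ∑ b, ∑ e, ∑ f, R (j,n) (b,f) * R (i,b) (k,e) * R (e,f) (l,m) := hY i j n k l m
      _ = ∑ e, ∑ b, ∑ f, R (j,n) (b,f) * R (i,b) (k,e) * R (e,f) (l,m) := Finset.sum_comm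
      _ = ∑ b, ∑ e, ∑ f, R (b,f) (l,m) * R (i,e) (k,b) * R (j,n) (e,f) := by
          refine Finset.sum_congr rfl fun b _ => Finset.sum_congr rfl fun e _ =>
            Finset.sum_congr rfl fun f _ => by ring
  have := core' (Matrix.of fun p q => R q p) (Matrix.of fun p q => Ψ q p)
      (fun k l i j => hAt k l i j) (fun k l i j => hBt k l i j)
      (fun k l m i j n => hYt k l m i j n) r w z q
  simpa using this

end Steps

/-- Index form of the first skew-inverse relation. -/
lemma skewA_idx (h : tr2of3 (op12 R * op23 Ψ) = Pmat ι) :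
    ∀ k l i j : ι, (∑ a, ∑ y, R (k,a) (i,y) * Ψ (y,l) (a,j)) = if k = j ∧ l = i then 1 else 0 := by
  intro k l i j
  have := congrFun (congrFun h (k,l)) (i,j)
  simp only [tr2of3, op12, op23, Pmat, Matrix.mul_apply, Matrix.of_apply, Fintype.sum_prod_type,
    mul_ite, mul_one, mul_zero, ite_mul, one_mul, zero_mul, Finset.sum_ite_irrel,
    Finset.sum_const_zero, Finset.sum_ite_eq, Finset.sum_ite_eq', Finset.mem_univ, if_true] at this
  convert this using 1

/-- Index form of the Yang–Baxter equation. -/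
lemma yb_idx (h : YangBaxter R) :
    ∀ k l m i j n : ι,
      (∑ b, ∑ d, ∑ e, R (k,l) (d,b) * R (b,m) (e,n) * R (d,e) (i,j)) =
      ∑ b, ∑ e, ∑ f, R (l,m) (b,f) * R (k,b) (i,e) * R (e,f) (j,n) := by
  intro k l m i j n
  have := congrFun (congrFun h (k,l,m)) (i,j,n)
  simp only [YangBaxter, op12, op23, Matrix.mul_apply, Matrix.of_apply, Fintype.sum_prod_type,
    mul_ite, mul_one, mul_zero, ite_mul, one_mul, zero_mul, Finset.sum_ite_irrel,
    Finset.sum_const_zero, Finset.sum_ite_eq, Finset.sum_ite_eq', Finset.mem_univ, if_true] at this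
  simp only [Finset.sum_mul] at this
  conv at this => lhs; enter [2,x]; rw [Finset.sum_comm]
  conv at this => lhs; rw [Finset.sum_comm]
  conv at this => rhs; enter [2,x]; rw [Finset.sum_comm]
  conv at this => rhs; rw [Finset.sum_comm]
  exact this

/-- Corollary to Proposition 1:
`Tr₍₂₎(C₂R₂₁⁻¹) = Tr₍₂₎(D₂R⁻¹) = CD = DC`. -/
theorem stmt7 {ι : Type*} [Fintype ι] [DecidableEq ι] [Nonempty ι]
    (R Ψ : Op ι) (hR : IsUnit R) (hYB : YangBaxter R) (hskew : SkewInverse R Ψ) :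
    tr2 (u2 (tr1 Ψ) * (Pmat ι * R * Pmat ι)⁻¹) = tr1 Ψ * tr2 Ψ ∧
    tr2 (u2 (tr2 Ψ) * R⁻¹) = tr1 Ψ * tr2 Ψ ∧
    tr1 Ψ * tr2 Ψ = tr2 Ψ * tr1 Ψ := by
  obtain ⟨hsk1, hsk2⟩ := hskew
  have hA := skewA_idx R Ψ hsk1
  have hB := skewA_idx Ψ R hsk2
  have hY := yb_idx R hYB
  have hRdet : IsUnit R.det := (Matrix.isUnit_iff_isUnit_det R).mp hR
  have hRRi : R * R⁻¹ = 1 := Matrix.mul_nonsing_inv R hRdet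
  have hRiR : R⁻¹ * R = 1 := Matrix.nonsing_inv_mul R hRdet
  have hPP : Pmat ι * Pmat ι = 1 := by
    ext ⟨k,l⟩ ⟨i,j⟩
    simp only [Pmat, Matrix.mul_apply, Matrix.of_apply, Fintype.sum_prod_type, Matrix.one_apply,
      ite_and, mul_ite, mul_one, mul_zero, ite_mul, one_mul, zero_mul, Finset.sum_ite_irrel,
      Finset.sum_const_zero, Finset.sum_ite_eq, Finset.sum_ite_eq', Finset.mem_univ, if_true,
      Prod.mk.injEq]
  have hQinv : (Pmat ι * R * Pmat ι)⁻¹ = Pmat ι * R⁻¹ * Pmat ι := by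
    refine Matrix.inv_eq_left_inv ?_
    calc Pmat ι * R⁻¹ * Pmat ι * (Pmat ι * R * Pmat ι)
        = Pmat ι * R⁻¹ * (Pmat ι * Pmat ι) * R * Pmat ι := by
          simp only [Matrix.mul_assoc]
      _ = Pmat ι * (R⁻¹ * R) * Pmat ι := by rw [hPP]; simp only [Matrix.mul_assoc, Matrix.one_mul]
      _ = 1 := by rw [hRiR, Matrix.mul_one, hPP]
  have core1 := core' R Ψ hA hB hY
  have core2 := coreSwap R Ψ hA hB hY
  have core3 := coreTrans R Ψ hA hB hY
  -- the matrix `A₁` with `A₁ * R = P * D₂`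
  set A1 : Op ι := Matrix.of (fun zq jn => ∑ p, tr2 Ψ p jn.1 * Ψ zq (jn.2, p)) with hA1def
  have hM1 : A1 * R = Pmat ι * u2 (tr2 Ψ) := by
    ext ⟨z,q⟩ ⟨r,w⟩
    have h := core3 r w z q
    simp only [hA1def, Matrix.mul_apply, Matrix.of_apply, Fintype.sum_prod_type, u2, Pmat, tr2,
      mul_ite, mul_one, mul_zero, ite_mul, one_mul, zero_mul, Finset.sum_ite_irrel,
      Finset.sum_const_zero, Finset.sum_ite_eq, Finset.sum_ite_eq', Finset.mem_univ, if_true]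
    calc (∑ j, ∑ n, (∑ p, (∑ g, Ψ (p,g) (j,g)) * Ψ (z,q) (n,p)) * R (j,n) (r,w))
        = ∑ j, ∑ n, ∑ p, (R (j,n) (r,w) * ∑ g, Ψ (p,g) (j,g)) * Ψ (z,q) (n,p) := by
          refine Finset.sum_congr rfl fun j _ => Finset.sum_congr rfl fun n _ => ?_
          rw [Finset.sum_mul]
          exact Finset.sum_congr rfl fun p _ => by ring
      _ = (if r = q then 1 else 0) * ∑ g, Ψ (z,g) (w,g) := h
      _ = ∑ x, if z = x ∧ q = r then ∑ x1, Ψ (x,x1) (w,x1) else 0 := by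
          by_cases hqr : r = q
          · simp [hqr, ite_and, Finset.sum_ite_irrel, Finset.sum_const_zero,
              Finset.sum_ite_eq, Finset.sum_ite_eq']
          · have h2 : ¬ (q = r) := fun hh => hqr hh.symm
            simp [hqr, h2]
  have hu2D : u2 (tr2 Ψ) * R⁻¹ = Pmat ι * A1 := by
    have h1 : u2 (tr2 Ψ) = Pmat ι * A1 * R := by
      rw [Matrix.mul_assoc, hM1, ← Matrix.mul_assoc, hPP, Matrix.one_mul]
    rw [h1, Matrix.mul_assoc, hRRi, Matrix.mul_one]
  have goal2 : tr2 (u2 (tr2 Ψ) * R⁻¹) = tr1 Ψ * tr2 Ψ := by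
    rw [hu2D]
    ext k i
    simp only [tr2, tr1, Matrix.mul_apply, Matrix.of_apply, Pmat, hA1def, Fintype.sum_prod_type,
      ite_and, mul_ite, mul_one, mul_zero, ite_mul, one_mul, zero_mul, Finset.sum_ite_irrel,
      Finset.sum_const_zero, Finset.sum_ite_eq, Finset.sum_ite_eq', Finset.mem_univ, if_true]
    rw [Finset.sum_comm]
    refine Finset.sum_congr rfl fun p _ => ?_
    rw [← Finset.mul_sum, mul_comm]
  -- goal (iii): the matrix `A3` with `R * A3 = P * D₁`
  set A3 : Op ι := Matrix.of (fun yx ij => ∑ v, tr2 Ψ yx.1 v * Ψ (yx.2, v) ij) with hA3def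
  have hM3 : R * A3 = Pmat ι * u1 (tr2 Ψ) := by
    ext ⟨l,k⟩ ⟨i,j⟩
    have h := core1 l k i j
    simp only [hA3def, Matrix.mul_apply, Matrix.of_apply, Fintype.sum_prod_type, u1, Pmat, tr2,
      mul_ite, mul_one, mul_zero, ite_mul, one_mul, zero_mul, Finset.sum_ite_irrel,
      Finset.sum_const_zero, Finset.sum_ite_eq, Finset.sum_ite_eq', Finset.mem_univ, if_true]
    calc (∑ y, ∑ n, R (l,k) (y,n) * ∑ p, (∑ g, Ψ (y,g) (p,g)) * Ψ (n,p) (i,j))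
        = ∑ y, ∑ n, ∑ p, (R (l,k) (y,n) * ∑ g, Ψ (y,g) (p,g)) * Ψ (n,p) (i,j) := by
          refine Finset.sum_congr rfl fun y _ => Finset.sum_congr rfl fun n _ => ?_
          rw [Finset.mul_sum]
          exact Finset.sum_congr rfl fun p _ => by ring
      _ = (if l = j then 1 else 0) * ∑ g, Ψ (k,g) (i,g) := h
      _ = ∑ x, if l = j ∧ k = x then ∑ x1, Ψ (x,x1) (i,x1) else 0 := by
          by_cases hlj : l = j
          · simp [hlj, ite_and, Finset.sum_ite_irrel, Finset.sum_const_zero,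
              Finset.sum_ite_eq, Finset.sum_ite_eq']
          · simp [hlj]
  have hA3eq : A3 = R⁻¹ * (Pmat ι * u1 (tr2 Ψ)) := by
    rw [← hM3, ← Matrix.mul_assoc, hRiR, Matrix.one_mul]
  -- entrywise consequence (E3)
  have hE3 : ∀ y x i j : ι, (∑ v, tr2 Ψ y v * Ψ (x,v) (i,j)) =
      ∑ t, R⁻¹ ((y,x)) ((j,t)) * tr2 Ψ t i := by
    intro y x i j
    have h := congrFun (congrFun hA3eq (y,x)) (i,j)
    simp only [hA3def, Matrix.mul_apply, Matrix.of_apply, Fintype.sum_prod_type, u1, Pmat,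
      mul_ite, mul_one, mul_zero, ite_mul, one_mul, zero_mul, Finset.sum_ite_irrel, ite_and,
      Finset.sum_const_zero, Finset.sum_ite_eq, Finset.sum_ite_eq', Finset.mem_univ, if_true] at h
    exact h
  -- (D C)(y,j) = Tr₂(D₂ R⁻¹)(y,j)
  have hDC : ∀ y j : ι, (tr2 Ψ * tr1 Ψ) y j = tr2 (u2 (tr2 Ψ) * R⁻¹) y j := by
    intro y j
    have h1 : (∑ i, ∑ v, tr2 Ψ y v * Ψ (i,v) (i,j)) =
        ∑ i, ∑ t, R⁻¹ ((y,i)) ((j,t)) * tr2 Ψ t i :=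
      Finset.sum_congr rfl fun i _ => hE3 y i i j
    calc (tr2 Ψ * tr1 Ψ) y j
        = ∑ i, ∑ v, tr2 Ψ y v * Ψ (i,v) (i,j) := by
          simp only [Matrix.mul_apply, tr1, Matrix.of_apply, Finset.mul_sum]
          rw [Finset.sum_comm]
      _ = ∑ i, ∑ t, R⁻¹ ((y,i)) ((j,t)) * tr2 Ψ t i := h1
      _ = tr2 (u2 (tr2 Ψ) * R⁻¹) y j := by
          simp only [tr2, u2, Matrix.mul_apply, Matrix.of_apply, Fintype.sum_prod_type, ite_mul,
            one_mul, zero_mul, mul_ite, mul_one, mul_zero, ite_and, Finset.sum_ite_irrel,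
            Finset.sum_const_zero, Finset.sum_ite_eq, Finset.sum_ite_eq', Finset.mem_univ, if_true]
          rw [Finset.sum_comm]
          exact Finset.sum_congr rfl fun a _ => Finset.sum_congr rfl fun b _ => mul_comm _ _
  have goal3 : tr1 Ψ * tr2 Ψ = tr2 Ψ * tr1 Ψ := by
    ext y j
    rw [hDC y j, ← goal2]
  -- goal (i): the matrix `B1` with `R * B1 = C₁ * P`
  set B1 : Op ι := Matrix.of (fun nj qz => ∑ p, tr1 Ψ nj.2 p * Ψ (p, nj.1) qz) with hB1def
  have hM2 : R * B1 = u1 (tr1 Ψ) * Pmat ι := by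
    ext ⟨w,r⟩ ⟨q,z⟩
    have h := core2 r w z q
    simp only [hB1def, Matrix.mul_apply, Matrix.of_apply, Fintype.sum_prod_type, u1, Pmat, tr1,
      mul_ite, mul_one, mul_zero, ite_mul, one_mul, zero_mul, Finset.sum_ite_irrel, ite_and,
      Finset.sum_const_zero, Finset.sum_ite_eq, Finset.sum_ite_eq', Finset.mem_univ, if_true]
    calc (∑ n, ∑ j, R (w,r) (n,j) * ∑ p, (∑ g, Ψ (g,j) (g,p)) * Ψ (p,n) (q,z))
        = ∑ j, ∑ n, R (w,r) (n,j) * ∑ p, (∑ g, Ψ (g,j) (g,p)) * Ψ (p,n) (q,z) :=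
          Finset.sum_comm
      _ = ∑ j, ∑ n, ∑ p, (R (w,r) (n,j) * ∑ g, Ψ (g,j) (g,p)) * Ψ (p,n) (q,z) := by
          refine Finset.sum_congr rfl fun j _ => Finset.sum_congr rfl fun n _ => ?_
          rw [Finset.mul_sum]
          exact Finset.sum_congr rfl fun p _ => by ring
      _ = (if r = q then 1 else 0) * ∑ g, Ψ (g,w) (g,z) := h
      _ = (if r = q then ∑ x, Ψ (x,w) (x,z) else 0) := by
          simp [ite_mul]
  have hB1eq : B1 = R⁻¹ * (u1 (tr1 Ψ) * Pmat ι) := by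
    rw [← hM2, ← Matrix.mul_assoc, hRiR, Matrix.one_mul]
  have hE2 : ∀ n j q z : ι, (∑ p, tr1 Ψ j p * Ψ (p,n) (q,z)) =
      ∑ s, R⁻¹ ((n,j)) ((s,q)) * tr1 Ψ s z := by
    intro n j q z
    have h := congrFun (congrFun hB1eq (n,j)) (q,z)
    simp only [hB1def, Matrix.mul_apply, Matrix.of_apply, Fintype.sum_prod_type, u1, Pmat,
      mul_ite, mul_one, mul_zero, ite_mul, one_mul, zero_mul, Finset.sum_ite_irrel, ite_and,
      Finset.sum_const_zero, Finset.sum_ite_eq, Finset.sum_ite_eq', Finset.mem_univ, if_true] at h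
    exact h
  have goal1 : tr2 (u2 (tr1 Ψ) * (Pmat ι * R * Pmat ι)⁻¹) = tr1 Ψ * tr2 Ψ := by
    rw [hQinv]
    ext k i
    have h1 : (∑ n, ∑ p, tr1 Ψ k p * Ψ (p,n) (i,n)) =
        ∑ n, ∑ s, R⁻¹ ((n,k)) ((s,i)) * tr1 Ψ s n :=
      Finset.sum_congr rfl fun n _ => hE2 n k i n
    calc tr2 (u2 (tr1 Ψ) * (Pmat ι * R⁻¹ * Pmat ι)) k i
        = ∑ a, ∑ t, tr1 Ψ a t * R⁻¹ ((t,k)) ((a,i)) := by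
          simp only [tr2, u2, Pmat, Matrix.mul_apply, Matrix.of_apply, Fintype.sum_prod_type,
            mul_ite, mul_one, mul_zero, ite_mul, one_mul, zero_mul, Finset.sum_ite_irrel, ite_and,
            Finset.sum_const_zero, Finset.sum_ite_eq, Finset.sum_ite_eq', Finset.mem_univ, if_true]
      _ = ∑ n, ∑ s, R⁻¹ ((n,k)) ((s,i)) * tr1 Ψ s n := by
          rw [Finset.sum_comm]
          exact Finset.sum_congr rfl fun a _ => Finset.sum_congr rfl fun b _ => mul_comm _ _
      _ = ∑ n, ∑ p, tr1 Ψ k p * Ψ (p,n) (i,n) := h1.symm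
      _ = (tr1 Ψ * tr2 Ψ) k i := by
          simp only [Matrix.mul_apply, tr2, Matrix.of_apply, Finset.mul_sum]
          rw [Finset.sum_comm]
  exact ⟨goal1, goal2, goal3⟩

end

end BMWPaper
end

section
/- (Proposition 3, existence and group-likeness of τ) Let R be a skew-invertible BMW type R-matrix on V⊗V with parameters (q,ν), with rank-one decomposition K^{kl}_{ij} = ḡ_{ij}·g^{kl}. Let A be a ℂ-bialgebra with coproduct Δ and counit ε, and let T ∈ Matrix ι ι A satisfy the RTT relations, Δ(T_i^j) = ∑_k T_i^k ⊗ T_k^j, and ε(T_i^j) = δ_i^j. Then there exists τ ∈ A such that ∑_{a,b} K^{kl}_{ab} T_i^a T_j^b = τ·K^{kl}_{ij} for all i,j,k,l ∈ ι (i.e., K₁₂T₁T₂ = τ·K₁₂), and this τ is group-like: Δ(τ) = τ ⊗ τ and ε(τ) = 1. -/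
/-!
`K` is a polynomial in `R`, and the RTT relations say that `R` commutes with `T₁T₂`; hence so
does `K`. Since `K = g ḡᵀ` has rank one, `K · T₁T₂ = g wᵀ` and `T₁T₂ · K = w' ḡᵀ` for vectors
`w, w'` over `A`, and their equality forces `w = τ ḡ` for some `τ ∈ A`, i.e. `K · T₁T₂ = τ K`.
Applying `Δ` and `ε` to this identity, and using that `T₁T₂` is again comultiplicative, gives
`K Δ(τ) = K (τ ⊗ τ)` and `K ε(τ) = K`; cancelling a nonzero entry of `K` shows `τ` is group-like.
-/

open scoped BigOperators

namespace BMWPaper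

noncomputable section

variable {ι : Type*} [Fintype ι] [DecidableEq ι]

section

variable {F A : Type*} [Field F] [Ring A] [Algebra F A] {n : Type*} [Fintype n]

theorem map_mul_apply (M : Matrix n n F) (N : Matrix n n A) (p r : n) :
    (M.map (algebraMap F A) * N) p r = ∑ s, M p s • N s r := by
  simp only [Matrix.mul_apply, Matrix.map_apply, Algebra.smul_def]

theorem mul_map_apply (M : Matrix n n F) (N : Matrix n n A) (p r : n) :
    (N * M.map (algebraMap F A)) p r = ∑ s, M s r • N p s := by
  simp only [Matrix.mul_apply, Matrix.map_apply, Algebra.smul_def, Algebra.commutes]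

theorem commute_map_of_mem_adjoin [DecidableEq n] {M M' : Matrix n n F} {N : Matrix n n A}
    (hM' : M' ∈ Algebra.adjoin F {M}) (hM : Commute (M.map (algebraMap F A)) N) :
    Commute (M'.map (algebraMap F A)) N := by
  let φ : Matrix n n F →ₐ[F] Matrix n n A := (Algebra.ofId F A).mapMatrix
  have hφ : ∀ X, X ∈ (Subalgebra.centralizer F {N}).comap φ ↔
      Commute (X.map (algebraMap F A)) N := fun X => by
    simp only [Subalgebra.mem_comap, AlgHom.mapMatrix_apply, Subalgebra.mem_centralizer_iff,
      Set.mem_singleton_iff, eq_comm, forall_eq', commute_iff_eq, φ]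
    rfl
  rw [← hφ] at hM ⊢
  exact Algebra.adjoin_le (Set.singleton_subset_iff.mpr hM) hM'

theorem exists_smul_eq_smul_mul_smul {u v : n → F} {w w' : n → A}
    (h : ∀ r p, u r • w p = v p • w' r) : ∃ τ : A, ∀ r p, u r • w p = (u r * v p) • τ := by
  by_cases hu : ∃ r₀, u r₀ ≠ 0
  · obtain ⟨r₀, hr₀⟩ := hu
    refine ⟨(u r₀)⁻¹ • w' r₀, fun r p => ?_⟩
    have hw : w p = v p • (u r₀)⁻¹ • w' r₀ := by
      rw [smul_comm, ← h r₀ p, inv_smul_smul₀ hr₀]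
    rw [hw, mul_smul]
  · push Not at hu
    exact ⟨0, fun r p => by simp [hu]⟩

theorem exists_map_vecMulVec_mul_eq_smul {u v : n → F} {N : Matrix n n A}
    (h : Commute ((Matrix.vecMulVec u v).map (algebraMap F A)) N) :
    ∃ τ : A, ∀ p r,
      ((Matrix.vecMulVec u v).map (algebraMap F A) * N) p r = Matrix.vecMulVec u v p r • τ := by
  have hrow : ∀ p r, ((Matrix.vecMulVec u v).map (algebraMap F A) * N) p r =
      u p • ∑ s, v s • N s r := fun p r => by
    simp only [map_mul_apply, Matrix.vecMulVec_apply, Finset.smul_sum, smul_smul]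
  have hcol : ∀ p r, (N * (Matrix.vecMulVec u v).map (algebraMap F A)) p r =
      v r • ∑ s, u s • N p s := fun p r => by
    simp only [mul_map_apply, Matrix.vecMulVec_apply, Finset.smul_sum, smul_smul, mul_comm]
  obtain ⟨τ, hτ⟩ := exists_smul_eq_smul_mul_smul (w := fun r => ∑ s, v s • N s r)
    (w' := fun p => ∑ s, u s • N p s) fun p r => by
      rw [← hrow, ← hcol, h.eq]
  exact ⟨τ, fun p r => by rw [hrow, hτ, Matrix.vecMulVec_apply]⟩

end

section

variable {F A : Type*} [Field F] [Ring A] [Bialgebra F A] {n : Type*} [Fintype n]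

theorem comul_eq_tmul_self_of_map_mul_eq_smul {N : Matrix n n A}
    (hN : ∀ p r, Coalgebra.comul (R := F) (N p r) = ∑ s, N s r ⊗ₜ[F] N p s)
    {M : Matrix n n F} (hM : M ≠ 0) {τ : A}
    (hτ : ∀ p r, (M.map (algebraMap F A) * N) p r = M p r • τ) :
    Coalgebra.comul (R := F) τ = τ ⊗ₜ[F] τ := by
  obtain ⟨p, r, hpr⟩ : ∃ p r, M p r ≠ 0 := by
    by_contra! h
    exact hM (Matrix.ext h)
  apply smul_right_injective _ hpr
  calc M p r • Coalgebra.comul (R := F) τ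
      = Coalgebra.comul (R := F) (∑ t, M p t • N t r) := by
        rw [← map_smul, ← hτ, map_mul_apply]
    _ = ∑ s, N s r ⊗ₜ[F] ∑ t, M p t • N t s := by
        simp only [map_sum, map_smul, hN, Finset.smul_sum, TensorProduct.tmul_sum,
          TensorProduct.tmul_smul]
        exact Finset.sum_comm
    _ = ∑ s, M p s • (N s r ⊗ₜ[F] τ) := by
        simp only [← map_mul_apply, hτ, TensorProduct.tmul_smul]
    _ = M p r • (τ ⊗ₜ[F] τ) := by
        rw [TensorProduct.smul_tmul', ← hτ, map_mul_apply, TensorProduct.sum_tmul]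
        simp only [TensorProduct.smul_tmul']

theorem counit_eq_one_of_map_mul_eq_smul [DecidableEq n] {N : Matrix n n A}
    (hN : ∀ p r, Coalgebra.counit (R := F) (N p r) = if p = r then 1 else 0)
    {M : Matrix n n F} (hM : M ≠ 0) {τ : A}
    (hτ : ∀ p r, (M.map (algebraMap F A) * N) p r = M p r • τ) :
    Coalgebra.counit (R := F) τ = 1 := by
  obtain ⟨p, r, hpr⟩ : ∃ p r, M p r ≠ 0 := by
    by_contra! h
    exact hM (Matrix.ext h)
  apply mul_left_cancel₀ hpr
  calc M p r * Coalgebra.counit (R := F) τ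
      = Coalgebra.counit (R := F) (∑ t, M p t • N t r) := by
        rw [← smul_eq_mul, ← map_smul, ← hτ, map_mul_apply]
    _ = M p r * 1 := by simp [hN]

end

section

variable {m A : Type*} [Ring A] {F : Type*} [Field F]

/-- The paper's `T₁T₂`, for `T i a` read as the paper's `T_i^a` (upper indices label rows). -/
def tensorSq (T : Matrix m m A) : Matrix (m × m) (m × m) A :=
  Matrix.of fun p r => T r.1 p.1 * T r.2 p.2

theorem counit_tensorSq [DecidableEq m] [Bialgebra F A] {T : Matrix m m A}
    (hT : ∀ i j, Coalgebra.counit (R := F) (T i j) = if i = j then 1 else 0) (p r : m × m) :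
    Coalgebra.counit (R := F) (tensorSq T p r) = if p = r then 1 else 0 := by
  simp only [tensorSq, Matrix.of_apply, Bialgebra.counit_mul, hT, Prod.ext_iff, ite_and,
    eq_comm (a := p.1), eq_comm (a := p.2)]
  split_ifs <;> simp

variable [Fintype m]

theorem map_mul_tensorSq_apply [Algebra F A] (M : Matrix (m × m) (m × m) F) (T : Matrix m m A)
    (k l i j : m) : (M.map (algebraMap F A) * tensorSq T) (k, l) (i, j) =
      ∑ a, ∑ b, M (k, l) (a, b) • (T i a * T j b) := by
  rw [map_mul_apply, Fintype.sum_prod_type]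
  rfl

theorem tensorSq_mul_map_apply [Algebra F A] (M : Matrix (m × m) (m × m) F) (T : Matrix m m A)
    (k l i j : m) : (tensorSq T * M.map (algebraMap F A)) (k, l) (i, j) =
      ∑ a, ∑ b, M (a, b) (i, j) • (T a k * T b l) := by
  rw [mul_map_apply, Fintype.sum_prod_type]
  rfl

theorem comul_tensorSq [Bialgebra F A] {T : Matrix m m A}
    (hT : ∀ i j, Coalgebra.comul (R := F) (T i j) = ∑ k, T i k ⊗ₜ[F] T k j) (p r : m × m) :
    Coalgebra.comul (R := F) (tensorSq T p r) = ∑ s, tensorSq T s r ⊗ₜ[F] tensorSq T p s := by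
  simp only [tensorSq, Matrix.of_apply, Bialgebra.comul_mul, hT, Finset.sum_mul_sum,
    Algebra.TensorProduct.tmul_mul_tmul, Fintype.sum_prod_type]

end

theorem Kmat_mem_adjoin (q ν : ℂ) (R : Op ι) : Kmat q ν R ∈ Algebra.adjoin ℂ {R} := by
  have hR := Algebra.self_mem_adjoin_singleton ℂ R
  set S := Algebra.adjoin ℂ {R}
  exact S.smul_mem (S.mul_mem (S.sub_mem (S.smul_mem S.one_mem q) hR)
    (S.add_mem (S.smul_mem S.one_mem q⁻¹) hR)) _

open scoped TensorProduct in
theorem stmt15_general {ι : Type*} [Fintype ι] [DecidableEq ι]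
    (q ν : ℂ)
    (R : Op ι)
    (gbar g : ι → ι → ℂ)
    (hdec : ∀ i j k l, Kmat q ν R (k, l) (i, j) = gbar i j * g k l)
    (A : Type*) [Ring A] [Bialgebra ℂ A]
    (T : Matrix ι ι A)
    (hRTT : ∀ i j k l, ∑ a, ∑ b, R (k, l) (a, b) • (T i a * T j b) =
      ∑ a, ∑ b, R (a, b) (i, j) • (T a k * T b l))
    (hcomul : ∀ i j, Coalgebra.comul (R := ℂ) (T i j) = ∑ k, T i k ⊗ₜ[ℂ] T k j)
    (hcounit : ∀ i j, Coalgebra.counit (R := ℂ) (T i j) = if i = j then (1 : ℂ) else 0) :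
    ∃ τ : A,
      (∀ i j k l, ∑ a, ∑ b, Kmat q ν R (k, l) (a, b) • (T i a * T j b) =
        Kmat q ν R (k, l) (i, j) • τ) ∧
      Coalgebra.comul (R := ℂ) τ = τ ⊗ₜ[ℂ] τ ∧
      Coalgebra.counit (R := ℂ) τ = 1 := by
  have hRT : Commute (R.map (algebraMap ℂ A)) (tensorSq T) := Matrix.ext fun ⟨k, l⟩ ⟨i, j⟩ => by
    rw [map_mul_tensorSq_apply, tensorSq_mul_map_apply]
    exact hRTT i j k l
  have hK : Kmat q ν R = Matrix.vecMulVec (fun p => g p.1 p.2) (fun r => gbar r.1 r.2) :=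
    Matrix.ext fun p r => by rw [Matrix.vecMulVec_apply, hdec, mul_comm]
  have hKT := commute_map_of_mem_adjoin (Kmat_mem_adjoin q ν R) hRT
  rw [hK] at hKT
  obtain ⟨τ, hτ⟩ := exists_map_vecMulVec_mul_eq_smul hKT
  rw [← hK] at hτ
  by_cases hK0 : Kmat q ν R = 0
  · refine ⟨1, fun i j k l => by simp [hK0], ?_, Bialgebra.counit_one⟩
    rw [Bialgebra.comul_one, Algebra.TensorProduct.one_def]
  refine ⟨τ, fun i j k l => ?_,
    comul_eq_tmul_self_of_map_mul_eq_smul (comul_tensorSq hcomul) hK0 hτ,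
    counit_eq_one_of_map_mul_eq_smul (counit_tensorSq hcounit) hK0 hτ⟩
  rw [← map_mul_tensorSq_apply, hτ]

open scoped TensorProduct in
/-- Proposition 3, existence and group-likeness of τ: if `T` satisfies
the RTT relations in a ℂ-bialgebra and is comultiplicative, then there is `τ` with
`K₁₂T₁T₂ = τ K₁₂`, and `τ` is group-like. -/
theorem stmt15 {ι : Type*} [Fintype ι] [DecidableEq ι] [Nonempty ι]
    (q ν : ℂ) (hq0 : q ≠ 0) (hq1 : q ≠ 1) (hqm1 : q ≠ -1)
    (hν0 : ν ≠ 0) (hνq : ν ≠ q) (hνq' : ν ≠ -q⁻¹)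
    (R Ψ : Op ι) (hBMW : BMWType q ν R) (hskew : SkewInverse R Ψ)
    (gbar g : ι → ι → ℂ)
    (hdec : ∀ i j k l, Kmat q ν R (k, l) (i, j) = gbar i j * g k l)
    (A : Type*) [Ring A] [Bialgebra ℂ A]
    (T : Matrix ι ι A)
    (hRTT : ∀ i j k l, ∑ a, ∑ b, R (k, l) (a, b) • (T i a * T j b) =
      ∑ a, ∑ b, R (a, b) (i, j) • (T a k * T b l))
    (hcomul : ∀ i j, Coalgebra.comul (R := ℂ) (T i j) = ∑ k, T i k ⊗ₜ[ℂ] T k j)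
    (hcounit : ∀ i j, Coalgebra.counit (R := ℂ) (T i j) = if i = j then (1 : ℂ) else 0) :
    ∃ τ : A,
      (∀ i j k l, ∑ a, ∑ b, Kmat q ν R (k, l) (a, b) • (T i a * T j b) =
        Kmat q ν R (k, l) (i, j) • τ) ∧
      Coalgebra.comul (R := ℂ) τ = τ ⊗ₜ[ℂ] τ ∧
      Coalgebra.counit (R := ℂ) τ = 1 :=
  stmt15_general q ν R gbar g hdec A T hRTT hcomul hcounit

end

end BMWPaper
end
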